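/- arXiv:2603.29884 — 4 statements merged into one kernel-verified Lean document; each statement's English description precedes it below -/
import Mathlib

section
/- Let f ∈ 𝔽 and P, Q be probability measures on a measurable space (Ω, 𝓕). Then D_f(P‖Q) ≤ f(0) + f*(0), and if P and Q are mutually singular then D_f(P‖Q) = f(0) + f*(0). Moreover, if 0 < f(0) + f*(0) < ∞, then D_f(P‖Q) = f(0) + f*(0) if and only if P and Q are mutually singular. -/
open MeasureTheory ProbabilityTheory Filter Set Topology
open scoped ENNReal NNReal

noncomputable section

/-- Extended-real positive part, as a value in `ℝ≥0∞`. -/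
def EReal.toENNReal' (x : EReal) : ℝ≥0∞ :=
  if x = ⊤ then ⊤ else ENNReal.ofReal x.toReal

/-- Quasi-integrability of an extended-real-valued function: the positive part or the negative
part has finite integral. -/
def QuasiIntegrable {Ω : Type*} [MeasurableSpace Ω] (μ : Measure Ω) (g : Ω → EReal) : Prop :=
  (∫⁻ ω, (g ω).toENNReal' ∂μ) < ⊤ ∨ (∫⁻ ω, (-(g ω)).toENNReal' ∂μ) < ⊤

/-- The integral of an extended-real-valued function, defined as the difference of the
integrals of the positive and negative parts. -/
def eInt {Ω : Type*} [MeasurableSpace Ω] (μ : Measure Ω) (g : Ω → EReal) : EReal :=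
  ((∫⁻ ω, (g ω).toENNReal' ∂μ : ℝ≥0∞) : EReal) - ((∫⁻ ω, (-(g ω)).toENNReal' ∂μ : ℝ≥0∞) : EReal)

lemma toENNReal'_coe (x : ℝ) : ((x : EReal)).toENNReal' = ENNReal.ofReal x := by
  simp [EReal.toENNReal']

lemma toENNReal'_top : (⊤ : EReal).toENNReal' = ⊤ := rfl

lemma toENNReal'_bot : (⊥ : EReal).toENNReal' = 0 := by
  simp [EReal.toENNReal']

lemma coe_ofReal_sub_coe_ofReal (x : ℝ) :
    ((ENNReal.ofReal x : ℝ≥0∞) : EReal) - ((ENNReal.ofReal (-x) : ℝ≥0∞) : EReal) = (x : EReal) := by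
  rcases le_or_gt 0 x with h | h
  · rw [ENNReal.ofReal_eq_zero.2 (by linarith : -x ≤ 0)]
    simp [EReal.coe_ennreal_ofReal, max_eq_left h]
  · rw [ENNReal.ofReal_eq_zero.2 h.le]
    simp only [EReal.coe_ennreal_zero, EReal.coe_ennreal_ofReal,
      max_eq_left (by linarith : (0:ℝ) ≤ -x)]
    rw [zero_sub, ← EReal.coe_neg, neg_neg]

lemma eInt_congr {Ω : Type*} [MeasurableSpace Ω] {μ : Measure Ω} {g h : Ω → EReal}
    (hgh : g =ᵐ[μ] h) : eInt μ g = eInt μ h := by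
  unfold eInt
  rw [lintegral_congr_ae (μ := μ) (f := fun ω => (g ω).toENNReal')
      (g := fun ω => (h ω).toENNReal') (hgh.mono fun ω hω => by simp only [hω]),
    lintegral_congr_ae (μ := μ) (f := fun ω => (-g ω).toENNReal')
      (g := fun ω => (-h ω).toENNReal') (hgh.mono fun ω hω => by simp only [hω])]

lemma eInt_const {Ω : Type*} [MeasurableSpace Ω] (μ : Measure Ω) [IsProbabilityMeasure μ]
    (c : EReal) (hc : c ≠ ⊥) : eInt μ (fun _ => c) = c := by
  unfold eInt
  rw [lintegral_const, lintegral_const, measure_univ, mul_one, mul_one]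
  induction c with
  | bot => exact absurd rfl hc
  | coe c =>
      rw [toENNReal'_coe, show -((c : ℝ) : EReal) = ((-c : ℝ) : EReal) from (EReal.coe_neg c).symm,
        toENNReal'_coe]
      exact coe_ofReal_sub_coe_ofReal c
  | top =>
      rw [toENNReal'_top, show -(⊤ : EReal) = ⊥ from rfl, toENNReal'_bot]
      simp [EReal.coe_ennreal_top]

lemma eInt_coe_eq_integral {Ω : Type*} [MeasurableSpace Ω] (μ : Measure Ω) (u : Ω → ℝ)
    (hu : Integrable u μ) :
    eInt μ (fun ω => ((u ω : ℝ) : EReal)) = ((∫ ω, u ω ∂μ : ℝ) : EReal) := by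
  unfold eInt
  have h1 : ∀ ω, ((u ω : EReal)).toENNReal' = ENNReal.ofReal (u ω) := fun ω => toENNReal'_coe _
  have h2 : ∀ ω, (-((u ω : ℝ) : EReal)).toENNReal' = ENNReal.ofReal (-u ω) := fun ω => by
    rw [← EReal.coe_neg]; exact toENNReal'_coe _
  simp only [h1, h2]
  have hfin1 : (∫⁻ ω, ENNReal.ofReal (u ω) ∂μ) ≠ ⊤ := by
    refine (lt_of_le_of_lt (lintegral_mono fun ω => ?_) hu.2).ne
    rw [← ofReal_norm_eq_enorm]
    exact ENNReal.ofReal_le_ofReal (le_abs_self _)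
  have hfin2 : (∫⁻ ω, ENNReal.ofReal (-u ω) ∂μ) ≠ ⊤ := by
    refine (lt_of_le_of_lt (lintegral_mono fun ω => ?_) hu.2).ne
    rw [← ofReal_norm_eq_enorm]
    exact ENNReal.ofReal_le_ofReal (by rw [Real.norm_eq_abs]; exact neg_le_abs _)
  rw [MeasureTheory.integral_eq_lintegral_pos_part_sub_lintegral_neg_part hu]
  rw [← ENNReal.ofReal_toReal hfin1, ← ENNReal.ofReal_toReal hfin2]
  rw [EReal.coe_sub]
  congr 1 <;> · rw [EReal.coe_ennreal_ofReal]; exact max_eq_left ENNReal.toReal_nonneg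

/-- `f` is strictly convex at the point `z`. -/
def StrictConvexAt (f : ℝ → EReal) (z : ℝ) : Prop :=
  ∀ x y α : ℝ, x ≠ z → y ≠ z → 0 < α → α < 1 → z = α * x + (1 - α) * y →
    f z < (α : EReal) * f x + ((1 - α : ℝ) : EReal) * f y

/-- The class `𝔽` of proper convex functions `f : ℝ → (-∞, +∞]` with domain contained in
`[0, ∞)`, right-continuous at `0`, with `f 1 = 0` and `1` in the interior of the domain. -/
structure MemF (f : ℝ → EReal) : Prop where
  ne_bot : ∀ x, f x ≠ ⊥
  convex : ∀ x y α : ℝ, 0 ≤ α → α ≤ 1 →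
    f (α * x + (1 - α) * y) ≤ (α : EReal) * f x + ((1 - α : ℝ) : EReal) * f y
  top_of_neg : ∀ x : ℝ, x < 0 → f x = ⊤
  right_continuous_at_zero : Tendsto f (nhdsWithin 0 (Set.Ioi 0)) (nhds (f 0))
  one_eq_zero : f 1 = 0
  one_mem_interior_dom : ∃ ε : ℝ, 0 < ε ∧ ∀ x : ℝ, |x - 1| < ε → f x ≠ ⊤

/-- The value `f*(0) = lim_{t → ∞} f(t)/t` of the convex conjugate at `0`. -/
def fStarZero (f : ℝ → EReal) : EReal :=
  Filter.limsup (fun t : ℝ => ((t⁻¹ : ℝ) : EReal) * f t) Filter.atTop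

variable {f : ℝ → EReal}

/-- Chord inequality: for `a < b < c`, the value at `b` is below the chord. -/
lemma MemF.chord (hf : MemF f) {a b c : ℝ} (hab : a < b) (hbc : b < c) :
    f b ≤ (((c - b) / (c - a) : ℝ) : EReal) * f a + (((b - a) / (c - a) : ℝ) : EReal) * f c := by
  have hac : a < c := hab.trans hbc
  have h1 : (0:ℝ) < c - a := by linarith
  have hα0 : (0:ℝ) ≤ (c - b) / (c - a) := div_nonneg (by linarith) (by linarith)
  have hα1 : (c - b) / (c - a) ≤ 1 := by
    rw [div_le_one h1]; linarith
  have key := hf.convex a c ((c - b) / (c - a)) hα0 hα1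
  have hb : (c - b) / (c - a) * a + (1 - (c - b) / (c - a)) * c = b := by
    field_simp
    ring
  have h2 : (1 - (c - b) / (c - a) : ℝ) = (b - a) / (c - a) := by
    field_simp
    ring
  rw [hb, h2] at key
  exact key

/-- On `[0, ∞)`, `f` is never `⊤` in a neighborhood of `1`; extract the two finite points. -/
lemma MemF.exists_pts (hf : MemF f) :
    ∃ δ : ℝ, 0 < δ ∧ δ ≤ 1/2 ∧ f (1 + δ) ≠ ⊤ ∧ f (1 - δ) ≠ ⊤ := by
  obtain ⟨ε, hε, hdom⟩ := hf.one_mem_interior_dom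
  refine ⟨min ε 1 / 2, by positivity, by
      have := min_le_right ε 1; linarith, hdom _ ?_, hdom _ ?_⟩ <;>
    · have h1 : min ε 1 ≤ ε := min_le_left _ _
      have h2 : 0 < min ε 1 := lt_min hε one_pos
      rw [abs_lt]; constructor <;> linarith

/-- `f t` is bounded below by an affine function `-K(1+t)` on `[0, ∞)`. -/
lemma MemF.lower_bound (hf : MemF f) :
    ∃ K : ℝ, 0 ≤ K ∧ ∀ t : ℝ, 0 ≤ t → ((-(K * (1 + t)) : ℝ) : EReal) ≤ f t := by
  obtain ⟨δ, hδ, hδ2, h₀, h₁⟩ := hf.exists_pts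
  set a₀ := (f (1 + δ)).toReal
  set a₁ := (f (1 - δ)).toReal
  have hfa₀ : f (1 + δ) = (a₀ : EReal) := (EReal.coe_toReal h₀ (hf.ne_bot _)).symm
  have hfa₁ : f (1 - δ) = (a₁ : EReal) := (EReal.coe_toReal h₁ (hf.ne_bot _)).symm
  have hKnn : (0:ℝ) ≤ (|a₀| + |a₁|) / δ + 1 := by
    have := div_nonneg (by positivity : (0:ℝ) ≤ |a₀| + |a₁|) hδ.le; linarith
  refine ⟨(|a₀| + |a₁|) / δ + 1, hKnn, fun t ht => ?_⟩
  set K := (|a₀| + |a₁|) / δ + 1 with hK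
  have hcancel : (|a₀| + |a₁|) / δ * δ = |a₀| + |a₁| := div_mul_cancel₀ _ hδ.ne'
  have hKδ : |a₀| ≤ K * δ ∧ |a₁| ≤ K * δ := by
    constructor <;> · rw [hK]; nlinarith [abs_nonneg a₀, abs_nonneg a₁]
  rcases eq_or_ne (f t) ⊤ with htop | htop
  · rw [htop]; exact le_top
  have hreal : f t = ((f t).toReal : EReal) := (EReal.coe_toReal htop (hf.ne_bot _)).symm
  set b := (f t).toReal
  rw [hreal, EReal.coe_le_coe_iff]
  -- three cases
  rcases lt_trichotomy t 1 with h | h | h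
  · -- t < 1 : use chord t < 1 < 1 + δ
    have key := hf.chord (a := t) (b := 1) (c := 1 + δ) h (by linarith)
    rw [hf.one_eq_zero, hreal, hfa₀] at key
    rw [show (((1 + δ - 1) / (1 + δ - t) : ℝ) : EReal) * (b : EReal)
        = (((1 + δ - 1) / (1 + δ - t) * b : ℝ) : EReal) from (EReal.coe_mul _ _).symm,
      show (((1 - t) / (1 + δ - t) : ℝ) : EReal) * (a₀ : EReal)
        = (((1 - t) / (1 + δ - t) * a₀ : ℝ) : EReal) from (EReal.coe_mul _ _).symm,
      show ((((1 + δ - 1) / (1 + δ - t) * b : ℝ)) : EReal) + (((1 - t) / (1 + δ - t) * a₀ : ℝ) : EReal)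
        = (((1 + δ - 1) / (1 + δ - t) * b + (1 - t) / (1 + δ - t) * a₀ : ℝ) : EReal)
        from (EReal.coe_add _ _).symm, show ((0:EReal)) = ((0:ℝ) : EReal) from rfl,
      EReal.coe_le_coe_iff] at key
    have hd : (0:ℝ) < 1 + δ - t := by linarith
    rw [div_mul_eq_mul_div, div_mul_eq_mul_div, ← add_div, le_div_iff₀ hd] at key
    have h1 : (1 - t) * a₀ ≥ -(K * δ) := by nlinarith [abs_le.1 (le_refl |a₀|), neg_abs_le a₀, hKδ.1]
    nlinarith [hKδ.1, neg_abs_le a₀, le_abs_self a₀]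
  · -- t = 1
    subst h
    rw [hf.one_eq_zero] at hreal
    have : b = 0 := by
      have := hreal
      exact_mod_cast this.symm
    rw [this]; nlinarith [hKnn]
  · -- t > 1 : use chord 1 - δ < 1 < t
    have key := hf.chord (a := 1 - δ) (b := 1) (c := t) (by linarith) h
    rw [hf.one_eq_zero, hreal, hfa₁] at key
    rw [show (((t - 1) / (t - (1 - δ)) : ℝ) : EReal) * (a₁ : EReal)
        = (((t - 1) / (t - (1 - δ)) * a₁ : ℝ) : EReal) from (EReal.coe_mul _ _).symm,
      show (((1 - (1 - δ)) / (t - (1 - δ)) : ℝ) : EReal) * (b : EReal)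
        = (((1 - (1 - δ)) / (t - (1 - δ)) * b : ℝ) : EReal) from (EReal.coe_mul _ _).symm,
      show ((((t - 1) / (t - (1 - δ)) * a₁ : ℝ)) : EReal) + (((1 - (1 - δ)) / (t - (1 - δ)) * b : ℝ) : EReal)
        = (((t - 1) / (t - (1 - δ)) * a₁ + (1 - (1 - δ)) / (t - (1 - δ)) * b : ℝ) : EReal)
        from (EReal.coe_add _ _).symm, show ((0:EReal)) = ((0:ℝ) : EReal) from rfl,
      EReal.coe_le_coe_iff] at key
    have hd : (0:ℝ) < t - (1 - δ) := by linarith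
    rw [div_mul_eq_mul_div, div_mul_eq_mul_div, ← add_div, le_div_iff₀ hd] at key
    nlinarith [neg_abs_le a₁, le_abs_self a₁, hKδ.2]

lemma EReal.le_coe_of_forall_add {x : EReal} {c : ℝ}
    (h : ∀ η : ℝ, 0 < η → x ≤ ((c + η : ℝ) : EReal)) : x ≤ (c : EReal) := by
  induction x with
  | bot => exact bot_le
  | coe r =>
      rw [EReal.coe_le_coe_iff]
      refine le_of_forall_pos_le_add fun η hη => ?_
      have := h η hη
      rwa [EReal.coe_le_coe_iff] at this
  | top =>
      exfalso
      have := h 1 one_pos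
      exact (EReal.coe_lt_top (c + 1)).not_ge this

lemma MemF.coe_le_fStarZero (hf : MemF f) :
    ∃ c : ℝ, (c : EReal) ≤ fStarZero f := by
  obtain ⟨δ, hδ, hδ2, h₀, _⟩ := hf.exists_pts
  set a₀ := (f (1 + δ)).toReal
  have hfa₀ : f (1 + δ) = (a₀ : EReal) := (EReal.coe_toReal h₀ (hf.ne_bot _)).symm
  refine ⟨-(|a₀| / δ), le_limsup_of_frequently_le (Eventually.frequently ?_)⟩
  filter_upwards [eventually_ge_atTop (2 + δ)] with t ht
  have ht1 : (1:ℝ) + δ < t := by linarith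
  have ht0 : (0:ℝ) < t := by linarith
  have key := hf.chord (a := 1) (b := 1 + δ) (c := t) (by linarith) ht1
  rw [hf.one_eq_zero, mul_zero, zero_add, hfa₀] at key
  rcases eq_or_ne (f t) ⊤ with htop | htop
  · rw [htop, EReal.coe_mul_top_of_pos (by positivity)]
    exact le_top
  have hb : f t = ((f t).toReal : EReal) := (EReal.coe_toReal htop (hf.ne_bot _)).symm
  set b := (f t).toReal
  rw [hb, ← EReal.coe_mul, EReal.coe_le_coe_iff] at key
  rw [hb, ← EReal.coe_mul, EReal.coe_le_coe_iff]
  have h2 : (t - 1) * a₀ ≤ δ * b := by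
    rw [show (1 + δ - 1 : ℝ) = δ from by ring, div_mul_eq_mul_div,
      le_div_iff₀ (by linarith : (0:ℝ) < t - 1)] at key
    linarith
  rw [inv_mul_eq_div, le_div_iff₀ ht0]
  nlinarith [le_abs_self a₀, neg_abs_le a₀, div_mul_cancel₀ |a₀| hδ.ne', abs_nonneg a₀]

lemma MemF.fStarZero_ne_bot (hf : MemF f) : fStarZero f ≠ ⊥ := by
  obtain ⟨c, hc⟩ := hf.coe_le_fStarZero
  intro h
  rw [h, le_bot_iff] at hc
  exact EReal.coe_ne_bot c hc

/-- The key upper bound: `f t ≤ f 0 + t f*(0)` for `t ≥ 0`. -/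
lemma MemF.le_linear (hf : MemF f) (t : ℝ) (ht : 0 ≤ t) :
    f t ≤ f 0 + (t : EReal) * fStarZero f := by
  rcases eq_or_lt_of_le ht with rfl | ht0
  · rw [show ((0:ℝ) : EReal) = (0 : EReal) from rfl, EReal.zero_mul, add_zero]
  rcases eq_or_ne (f 0) ⊤ with h0top | h0top
  · rw [h0top, EReal.top_add_of_ne_bot]
    · exact le_top
    intro h
    rcases eq_or_ne (fStarZero f) ⊤ with hstop | hstop
    · rw [hstop, EReal.coe_mul_top_of_pos ht0] at h
      exact (by simp : (⊤ : EReal) ≠ ⊥) h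
    · have hs : fStarZero f = ((fStarZero f).toReal : EReal) :=
        (EReal.coe_toReal hstop hf.fStarZero_ne_bot).symm
      rw [hs, ← EReal.coe_mul] at h
      exact EReal.coe_ne_bot _ h
  rcases eq_or_ne (fStarZero f) ⊤ with hstop | hstop
  · rw [hstop, EReal.coe_mul_top_of_pos ht0, EReal.add_top_of_ne_bot (hf.ne_bot 0)]
    exact le_top
  -- now both finite
  set c := (f 0).toReal
  set s := (fStarZero f).toReal
  have hf0 : f 0 = (c : EReal) := (EReal.coe_toReal h0top (hf.ne_bot _)).symm
  have hfs : fStarZero f = (s : EReal) := (EReal.coe_toReal hstop hf.fStarZero_ne_bot).symm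
  rw [hf0, hfs, ← EReal.coe_mul, ← EReal.coe_add]
  refine EReal.le_coe_of_forall_add fun η hη => ?_
  set η' := η / (2 * (t + 1)) with hη'
  have hη'0 : 0 < η' := by positivity
  have hlt : fStarZero f < ((s + η' : ℝ) : EReal) := by
    rw [hfs, EReal.coe_lt_coe_iff]; linarith
  have hev := Filter.eventually_lt_of_limsup_lt hlt
  have hev2 : ∀ᶠ r in atTop, (2 * t * (|c| + 1) / η ≤ r ∧ t + 1 ≤ r) := by
    filter_upwards [eventually_ge_atTop (2 * t * (|c| + 1) / η), eventually_ge_atTop (t + 1)]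
      with r h1 h2 using ⟨h1, h2⟩
  obtain ⟨r, hru, hr1, hr2⟩ := (hev.and hev2).exists
  have hrt : t < r := by linarith
  have hr0 : (0:ℝ) < r := by linarith
  -- f r is finite
  rcases eq_or_ne (f r) ⊤ with hrtop | hrtop
  · exfalso
    rw [hrtop, EReal.coe_mul_top_of_pos (by positivity)] at hru
    exact not_top_lt hru
  have hbr : f r = ((f r).toReal : EReal) := (EReal.coe_toReal hrtop (hf.ne_bot _)).symm
  set b := (f r).toReal
  rw [hbr, ← EReal.coe_mul, EReal.coe_lt_coe_iff] at hru
  -- chord 0 < t < r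
  have key := hf.chord (a := 0) (b := t) (c := r) ht0 hrt
  rw [hf0, hbr, sub_zero, sub_zero, ← EReal.coe_mul, ← EReal.coe_mul, ← EReal.coe_add] at key
  refine key.trans ?_
  rw [EReal.coe_le_coe_iff]
  -- real arithmetic
  have h1 : t / r * b ≤ t * (s + η') := by
    rw [div_mul_eq_mul_div, div_le_iff₀ hr0]
    have : b ≤ r * (s + η') := by
      have := (inv_mul_eq_div r b) ▸ hru
      rw [div_lt_iff₀ hr0] at this
      linarith [this]
    nlinarith [ht0.le]
  have h2 : (r - t) / r * c ≤ c + t * (|c| + 1) / r := by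
    rw [div_mul_eq_mul_div, add_div' _ _ _ hr0.ne', div_le_div_iff₀ hr0 hr0]
    nlinarith [mul_le_mul_of_nonneg_left (neg_le_abs c) ht0.le, hr0, ht0]
  have h3 : t * (|c| + 1) / r ≤ η / 2 := by
    rw [div_le_iff₀ hr0]
    rcases le_or_gt (2 * t * (|c| + 1)) 0 with hneg | hpos
    · nlinarith [abs_nonneg c]
    · rw [div_le_iff₀ hη] at hr1
      nlinarith
  have h4 : t * η' ≤ η / 2 := by
    rw [hη']
    rw [mul_div_assoc']
    rw [div_le_iff₀ (by positivity)]
    nlinarith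
  linarith

lemma MemF.ne_top_of_nonneg (hf : MemF f) {c s : ℝ} (hc : f 0 = (c : EReal))
    (hs : fStarZero f = (s : EReal)) {t : ℝ} (ht : 0 ≤ t) : f t ≠ ⊤ := by
  have := hf.le_linear t ht
  rw [hc, hs, ← EReal.coe_mul, ← EReal.coe_add] at this
  exact (this.trans_lt (EReal.coe_lt_top _)).ne

lemma MemF.toReal_le (hf : MemF f) {c s : ℝ} (hc : f 0 = (c : EReal))
    (hs : fStarZero f = (s : EReal)) {t : ℝ} (ht : 0 ≤ t) : (f t).toReal ≤ c + s * t := by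
  have h := hf.le_linear t ht
  rw [hc, hs, ← EReal.coe_mul, ← EReal.coe_add,
    (EReal.coe_toReal (hf.ne_top_of_nonneg hc hs ht) (hf.ne_bot t)).symm,
    EReal.coe_le_coe_iff] at h
  linarith

lemma MemF.realChord (hf : MemF f) {c s : ℝ} (hc : f 0 = (c : EReal))
    (hs : fStarZero f = (s : EReal)) {a b d : ℝ} (ha : 0 ≤ a) (hab : a < b) (hbd : b < d) :
    (f b).toReal ≤ (d - b) / (d - a) * (f a).toReal + (b - a) / (d - a) * (f d).toReal := by
  have key := hf.chord hab hbd
  rw [(EReal.coe_toReal (hf.ne_top_of_nonneg hc hs ha) (hf.ne_bot a)).symm,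
    (EReal.coe_toReal (hf.ne_top_of_nonneg hc hs (by linarith : (0:ℝ) ≤ b)) (hf.ne_bot b)).symm,
    (EReal.coe_toReal (hf.ne_top_of_nonneg hc hs (by linarith : (0:ℝ) ≤ d)) (hf.ne_bot d)).symm,
    ← EReal.coe_mul, ← EReal.coe_mul, ← EReal.coe_add, EReal.coe_le_coe_iff] at key
  exact key

lemma MemF.toReal_one (hf : MemF f) : (f 1).toReal = 0 := by rw [hf.one_eq_zero]; rfl

/-- Strict gap: if `0 < c + s` then `f t < c + s t` for `t > 0`. -/
lemma MemF.toReal_lt (hf : MemF f) {c s : ℝ} (hc : f 0 = (c : EReal))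
    (hs : fStarZero f = (s : EReal)) (hpos : 0 < c + s) {t : ℝ} (ht : 0 < t) :
    (f t).toReal < c + s * t := by
  have hc0 : (f 0).toReal = c := by rw [hc]; exact EReal.toReal_coe c
  rcases lt_trichotomy t 1 with h | h | h
  · have key := hf.realChord hc hs (le_refl 0) ht h
    rw [hc0, hf.toReal_one] at key
    rw [sub_zero, sub_zero, div_one, div_one, mul_zero, add_zero] at key
    nlinarith
  · subst h
    rw [hf.toReal_one, mul_one]
    exact hpos
  · have key := hf.realChord hc hs (by linarith : (0:ℝ) ≤ 1) h (by linarith : t < 2 * t)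
    rw [hf.toReal_one] at key
    have h2t := hf.toReal_le hc hs (by linarith : (0:ℝ) ≤ 2 * t)
    have hd : (0:ℝ) < 2 * t - 1 := by linarith
    rw [mul_zero, zero_add] at key
    have hfrac : (0:ℝ) ≤ (t - 1) / (2 * t - 1) := div_nonneg (by linarith) hd.le
    have : (f t).toReal ≤ (t - 1) / (2 * t - 1) * (c + s * (2 * t)) := by
      calc (f t).toReal ≤ (t - 1) / (2 * t - 1) * (f (2*t)).toReal := key
        _ ≤ (t - 1) / (2 * t - 1) * (c + s * (2 * t)) := by
            exact mul_le_mul_of_nonneg_left h2t hfrac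
    refine this.trans_lt ?_
    rw [div_mul_eq_mul_div, div_lt_iff₀ hd]
    nlinarith

/-- Convexity of `t ↦ (f t).toReal` on `(0, ∞)`. -/
lemma MemF.convexOn_toReal (hf : MemF f) {c s : ℝ} (hc : f 0 = (c : EReal))
    (hs : fStarZero f = (s : EReal)) :
    ConvexOn ℝ (Set.Ioi (0:ℝ)) (fun t => (f t).toReal) := by
  refine ⟨convex_Ioi 0, fun x hx y hy a b ha hb hab => ?_⟩
  simp only [Set.mem_Ioi] at hx hy
  have hb' : b = 1 - a := by linarith
  subst hb'
  have hxy : 0 < a * x + (1 - a) * y := by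
    rcases eq_or_lt_of_le ha with rfl | ha'
    · simpa using hy
    · exact add_pos_of_pos_of_nonneg (mul_pos ha' hx) (mul_nonneg hb hy.le)
  have key := hf.convex x y a ha (by linarith)
  rw [(EReal.coe_toReal (hf.ne_top_of_nonneg hc hs hx.le) (hf.ne_bot x)).symm,
    (EReal.coe_toReal (hf.ne_top_of_nonneg hc hs hy.le) (hf.ne_bot y)).symm,
    (EReal.coe_toReal (hf.ne_top_of_nonneg hc hs hxy.le) (hf.ne_bot _)).symm,
    ← EReal.coe_mul, ← EReal.coe_mul, ← EReal.coe_add, EReal.coe_le_coe_iff] at key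
  simpa using key

lemma MemF.measurable_aux (hf : MemF f) {c s : ℝ} (hc : f 0 = (c : EReal))
    (hs : fStarZero f = (s : EReal)) :
    Measurable ((Set.Ioi (0:ℝ)).piecewise (fun t => (f t).toReal) (fun _ => c)) := by
  refine ContinuousOn.measurable_piecewise ?_ continuousOn_const measurableSet_Ioi
  exact (hf.convexOn_toReal hc hs).continuousOn isOpen_Ioi

lemma MemF.piecewise_eq (hf : MemF f) {c : ℝ} (hc : f 0 = (c : EReal))
    {t : ℝ} (ht : 0 ≤ t) :
    (Set.Ioi (0:ℝ)).piecewise (fun t => (f t).toReal) (fun _ => c) t = (f t).toReal := by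
  rcases eq_or_lt_of_le ht with rfl | h
  · rw [Set.piecewise_eq_of_notMem _ _ _ (by simp), hc, EReal.toReal_coe]
  · exact Set.piecewise_eq_of_mem _ _ _ (Set.mem_Ioi.mpr h)

/-- Lower bound in real form. -/
lemma MemF.toReal_ge (hf : MemF f) {c s K : ℝ} (hc : f 0 = (c : EReal))
    (hs : fStarZero f = (s : EReal)) (hK : ∀ t : ℝ, 0 ≤ t → ((-(K * (1 + t)) : ℝ) : EReal) ≤ f t)
    {t : ℝ} (ht : 0 ≤ t) : -(K * (1 + t)) ≤ (f t).toReal := by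
  have h := hK t ht
  rw [(EReal.coe_toReal (hf.ne_top_of_nonneg hc hs ht) (hf.ne_bot t)).symm,
    EReal.coe_le_coe_iff] at h
  exact h

/-- The convex conjugate `f*` of `f ∈ 𝔽`: `f*(t) = t f(1/t)` for `t > 0`,
`f*(0) = lim_{t→∞} f(t)/t`, and `f* = ⊤` on negative reals. -/
def fConj (f : ℝ → EReal) : ℝ → EReal := fun t =>
  if 0 < t then ((t : ℝ) : EReal) * f t⁻¹
  else if t = 0 then fStarZero f
  else ⊤

/-- The ratio `dP/dQ` defined `(P+Q)`-a.e. via densities w.r.t. `λ = P + Q`, with the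
conventions `0/0 = ∞/∞ = 0` (which are those of `ℝ≥0∞` division). -/
def rnRatio {Ω : Type*} [MeasurableSpace Ω] (P Q : Measure Ω) : Ω → ℝ≥0∞ :=
  fun ω => P.rnDeriv (P + Q) ω / Q.rnDeriv (P + Q) ω

section Meas

variable {Ω : Type*} [MeasurableSpace Ω] (P Q : Measure Ω)
  [IsProbabilityMeasure P] [IsProbabilityMeasure Q]

lemma measurable_rnRatio : Measurable (rnRatio P Q) :=
  (Measure.measurable_rnDeriv _ _).div (Measure.measurable_rnDeriv _ _)

lemma habs_P : P ≪ P + Q := Measure.AbsolutelyContinuous.rfl.add_right Q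

lemma habs_Q : Q ≪ P + Q := by
  have h : Q ≪ Q + P := Measure.AbsolutelyContinuous.rfl.add_right P
  rwa [add_comm] at h

lemma meas_p_zero : P {ω | P.rnDeriv (P + Q) ω = 0} = 0 := by
  have hset : MeasurableSet {ω | P.rnDeriv (P + Q) ω = 0} :=
    Measure.measurable_rnDeriv _ _ (measurableSet_singleton 0)
  rw [← Measure.setLIntegral_rnDeriv (habs_P P Q)]
  rw [setLIntegral_congr_fun hset (fun ω hω => hω)]
  simp

lemma meas_q_zero : Q {ω | Q.rnDeriv (P + Q) ω = 0} = 0 := by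
  have hset : MeasurableSet {ω | Q.rnDeriv (P + Q) ω = 0} :=
    Measure.measurable_rnDeriv _ _ (measurableSet_singleton 0)
  rw [← Measure.setLIntegral_rnDeriv (habs_Q P Q)]
  rw [setLIntegral_congr_fun hset (fun ω hω => hω)]
  simp

lemma ae_P_p_ne_zero : ∀ᵐ ω ∂P, P.rnDeriv (P + Q) ω ≠ 0 := by
  rw [ae_iff]
  simpa using meas_p_zero P Q

lemma ae_Q_q_ne_zero : ∀ᵐ ω ∂Q, Q.rnDeriv (P + Q) ω ≠ 0 := by
  rw [ae_iff]
  simpa using meas_q_zero P Q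

lemma ae_P_p_lt_top : ∀ᵐ ω ∂P, P.rnDeriv (P + Q) ω < ⊤ :=
  (Measure.rnDeriv_lt_top P (P + Q)).filter_mono (habs_P P Q).ae_le

lemma ae_Q_q_lt_top : ∀ᵐ ω ∂Q, Q.rnDeriv (P + Q) ω < ⊤ :=
  (Measure.rnDeriv_lt_top Q (P + Q)).filter_mono (habs_Q P Q).ae_le

lemma ae_Q_rnRatio_ne_top : ∀ᵐ ω ∂Q, rnRatio P Q ω ≠ ⊤ := by
  filter_upwards [ae_Q_q_ne_zero P Q,
    (Measure.rnDeriv_lt_top P (P + Q)).filter_mono (habs_Q P Q).ae_le] with ω h1 h2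
  rw [rnRatio, Ne, ENNReal.div_eq_top]
  push_neg
  exact ⟨fun _ => h1, fun hp => absurd hp h2.ne⟩

lemma lintegral_rnRatio : ∫⁻ ω, rnRatio P Q ω ∂Q = 1 - P {ω | Q.rnDeriv (P + Q) ω = 0} := by
  have hq : MeasurableSet {ω | Q.rnDeriv (P + Q) ω ≠ 0} :=
    (Measure.measurable_rnDeriv _ _ (measurableSet_singleton 0)).compl
  rw [← lintegral_rnDeriv_mul (habs_Q P Q) (measurable_rnRatio P Q).aemeasurable]
  have hcong : (fun ω => Q.rnDeriv (P + Q) ω * rnRatio P Q ω)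
      =ᵐ[P + Q] {ω | Q.rnDeriv (P + Q) ω ≠ 0}.indicator (P.rnDeriv (P + Q)) := by
    filter_upwards [Measure.rnDeriv_lt_top Q (P + Q)] with ω hω
    by_cases hq0 : Q.rnDeriv (P + Q) ω = 0
    · simp [Set.indicator, hq0, rnRatio]
    · rw [Set.indicator_of_mem (by exact hq0)]
      exact ENNReal.mul_div_cancel hq0 hω.ne
  rw [lintegral_congr_ae hcong, lintegral_indicator hq _,
    Measure.setLIntegral_rnDeriv (habs_P P Q)]
  have : {ω | Q.rnDeriv (P + Q) ω ≠ 0} = {ω | Q.rnDeriv (P + Q) ω = 0}ᶜ := rfl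
  have hq0 : MeasurableSet {ω | Q.rnDeriv (P + Q) ω = 0} :=
    Measure.measurable_rnDeriv _ _ (measurableSet_singleton 0)
  rw [this, measure_compl hq0 (measure_ne_top _ _), measure_univ]

lemma P_rnRatio_top : P {ω | rnRatio P Q ω = ⊤} = P {ω | Q.rnDeriv (P + Q) ω = 0} := by
  apply measure_congr
  rw [Filter.eventuallyEq_set]
  filter_upwards [ae_P_p_ne_zero P Q, ae_P_p_lt_top P Q] with ω h1 h2
  simp only [Set.mem_setOf_eq, rnRatio, ENNReal.div_eq_top]
  constructor
  · rintro (⟨_, h⟩ | ⟨h, _⟩)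
    · exact h
    · exact absurd h h2.ne
  · intro h
    exact Or.inl ⟨h1, h⟩

lemma sing_rnRatio_zero (h : P.MutuallySingular Q) : rnRatio P Q =ᵐ[Q] 0 := by
  obtain ⟨A, hA, hPA, hQA⟩ := h
  have h1 : ∫⁻ ω in A, P.rnDeriv (P + Q) ω ∂(P + Q) = 0 := by
    rw [Measure.setLIntegral_rnDeriv (habs_P P Q)]; exact hPA
  have h2 : P.rnDeriv (P + Q) =ᵐ[(P + Q).restrict A] 0 :=
    (lintegral_eq_zero_iff (Measure.measurable_rnDeriv _ _)).1 h1
  have h3 : ∀ᵐ ω ∂(P + Q), ω ∈ A → P.rnDeriv (P + Q) ω = 0 := (ae_restrict_iff' hA).1 h2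
  have h4 : ∀ᵐ ω ∂Q, ω ∈ A → P.rnDeriv (P + Q) ω = 0 := h3.filter_mono (habs_Q P Q).ae_le
  have h5 : ∀ᵐ ω ∂Q, ω ∈ A := by
    rw [ae_iff]
    exact hQA
  filter_upwards [h4, h5] with ω hω hmem
  simp [rnRatio, hω hmem]

lemma sing_P_rnRatio_top (h : P.MutuallySingular Q) : P {ω | rnRatio P Q ω = ⊤} = 1 := by
  obtain ⟨A, hA, hPA, hQA⟩ := h
  have h1 : ∫⁻ ω in Aᶜ, Q.rnDeriv (P + Q) ω ∂(P + Q) = 0 := by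
    rw [Measure.setLIntegral_rnDeriv (habs_Q P Q)]; exact hQA
  have h2 : Q.rnDeriv (P + Q) =ᵐ[(P + Q).restrict Aᶜ] 0 :=
    (lintegral_eq_zero_iff (Measure.measurable_rnDeriv _ _)).1 h1
  have h3 : ∀ᵐ ω ∂(P + Q), ω ∈ Aᶜ → Q.rnDeriv (P + Q) ω = 0 := (ae_restrict_iff' hA.compl).1 h2
  have h4 : ∀ᵐ ω ∂P, ω ∈ Aᶜ → Q.rnDeriv (P + Q) ω = 0 := h3.filter_mono (habs_P P Q).ae_le
  have h5 : ∀ᵐ ω ∂P, ω ∈ Aᶜ := by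
    rw [ae_iff]
    simpa using hPA
  have h6 : ∀ᵐ ω ∂P, rnRatio P Q ω = ⊤ := by
    filter_upwards [h4, h5, ae_P_p_ne_zero P Q] with ω hω hmem hp
    rw [rnRatio, hω hmem]
    exact ENNReal.div_zero hp
  rw [← measure_univ (μ := P)]
  apply measure_congr
  rw [Filter.eventuallyEq_set]
  filter_upwards [h6] with ω hω
  simp [hω]

end Meas

/-- Extension of `f : ℝ → EReal` to `[0, ∞]`, with value `⊤` at `∞`. -/
def extF (f : ℝ → EReal) : ℝ≥0∞ → EReal :=
  fun x => if x = ⊤ then ⊤ else f x.toReal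

/-- The `f`-divergence `D_f(P‖Q) = ∫ f(dP/dQ) dQ + f*(0) P(dP/dQ = ∞)`.
Note that `Q(dP/dQ = ∞) = 0`, and that in `EReal` one has `f*(0) · 0 = 0`, which encodes the
convention that the second term vanishes when `P(dP/dQ = ∞) = 0`. -/
def fDiv {Ω : Type*} [MeasurableSpace Ω] (f : ℝ → EReal) (P Q : Measure Ω) : EReal :=
  eInt Q (fun ω => extF f (rnRatio P Q ω)) +
    fStarZero f * ((P {ω | rnRatio P Q ω = ⊤} : ℝ≥0∞) : EReal)

/-- The Csiszár index `S_f(X,Y) = D_f(P_X ⊗ P_Y ‖ P_{(X,Y)})`. -/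
def csiszarIndex {Ω α β : Type*} [MeasurableSpace Ω] [MeasurableSpace α] [MeasurableSpace β]
    (f : ℝ → EReal) (μ : Measure Ω) (X : Ω → α) (Y : Ω → β) : EReal :=
  fDiv f ((μ.map X).prod (μ.map Y)) (μ.map (fun ω => (X ω, Y ω)))

lemma coe_ennreal_eq_coe_toReal {x : ℝ≥0∞} (hx : x ≠ ⊤) :
    (x : EReal) = ((x.toReal : ℝ) : EReal) := by
  conv_lhs => rw [← ENNReal.ofReal_toReal hx]
  rw [EReal.coe_ennreal_ofReal, max_eq_left ENNReal.toReal_nonneg]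

lemma fDiv_finite_identity {Ω : Type*} [MeasurableSpace Ω] {f : ℝ → EReal} (hf : MemF f)
    (P Q : Measure Ω) [IsProbabilityMeasure P] [IsProbabilityMeasure Q]
    {c s : ℝ} (hc : f 0 = (c : EReal)) (hs : fStarZero f = (s : EReal)) :
    ∃ IG : ℝ≥0∞, IG ≠ ⊤ ∧ fDiv f P Q = ((c + s - IG.toReal : ℝ) : EReal) ∧
      (IG = 0 → ∀ᵐ ω ∂Q,
        (f ((rnRatio P Q ω).toReal)).toReal = c + s * (rnRatio P Q ω).toReal) := by
  obtain ⟨K, hK0, hKlb⟩ := hf.lower_bound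
  set r := rnRatio P Q with hr
  set rr : Ω → ℝ := fun ω => (r ω).toReal with hrr
  have hrr_nn : ∀ ω, 0 ≤ rr ω := fun ω => ENNReal.toReal_nonneg
  have hrr_meas : Measurable rr := (measurable_rnRatio P Q).ennreal_toReal
  set u : Ω → ℝ := fun ω => (f (rr ω)).toReal with hu
  set G : Ω → ℝ := fun ω => c + s * rr ω - u ω with hG
  have hGnn : ∀ ω, 0 ≤ G ω := fun ω =>
    sub_nonneg.2 (by rw [hu]; simpa [mul_comm] using hf.toReal_le hc hs (hrr_nn ω))
  have hu_meas : Measurable u := by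
    have : u = fun ω =>
        (Set.Ioi (0:ℝ)).piecewise (fun t => (f t).toReal) (fun _ => c) (rr ω) :=
      funext fun ω => (hf.piecewise_eq hc (hrr_nn ω)).symm
    rw [this]
    exact (hf.measurable_aux hc hs).comp hrr_meas
  set C : ℝ := K + |c| + |s| with hC
  have hu_bound : ∀ ω, ‖u ω‖ ≤ ‖C * (1 + rr ω)‖ := by
    intro ω
    have h1 := hf.toReal_le hc hs (hrr_nn ω)
    have h2 := hf.toReal_ge hc hs hKlb (hrr_nn ω)
    rw [Real.norm_eq_abs, Real.norm_eq_abs, abs_le]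
    have habs : C * (1 + rr ω) ≤ |C * (1 + rr ω)| := le_abs_self _
    have habs2 : -|C * (1 + rr ω)| ≤ -(C * (1 + rr ω)) := neg_le_neg habs
    constructor
    · have : -(C * (1 + rr ω)) ≤ -(K * (1 + rr ω)) := by
        have : K * (1 + rr ω) ≤ C * (1 + rr ω) := by
          apply mul_le_mul_of_nonneg_right _ (by nlinarith [hrr_nn ω])
          rw [hC]; nlinarith [abs_nonneg c, abs_nonneg s]
        linarith
      linarith [h2]
    · have : c + s * rr ω ≤ C * (1 + rr ω) := by
        have h3 : c ≤ |c| := le_abs_self c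
        have h4 : s * rr ω ≤ |s| * rr ω := mul_le_mul_of_nonneg_right (le_abs_self s) (hrr_nn ω)
        rw [hC]; nlinarith [hrr_nn ω, abs_nonneg c, abs_nonneg s]
      linarith [h1, habs]
  have hrr_int : Integrable rr Q := by
    refine ⟨hrr_meas.aestronglyMeasurable, ?_⟩
    rw [hasFiniteIntegral_iff_ofReal (ae_of_all _ hrr_nn)]
    refine lt_of_le_of_lt (lintegral_mono fun ω => ENNReal.ofReal_toReal_le) ?_
    rw [lintegral_rnRatio P Q]
    exact lt_of_le_of_lt tsub_le_self (by norm_num)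
  have hCrr_int : Integrable (fun ω => C * (1 + rr ω)) Q :=
    ((integrable_const (1:ℝ)).add hrr_int).const_mul C
  have hu_int : Integrable u Q :=
    hCrr_int.mono hu_meas.aestronglyMeasurable (ae_of_all _ hu_bound)
  have hG_int : Integrable G Q := ((integrable_const c).add (hrr_int.const_mul s)).sub hu_int
  -- the eInt term
  have hφeq : (fun ω => extF f (r ω)) =ᵐ[Q] fun ω => ((u ω : ℝ) : EReal) := by
    filter_upwards [ae_Q_rnRatio_ne_top P Q] with ω hω
    rw [extF, if_neg hω, hu]
    exact (EReal.coe_toReal (hf.ne_top_of_nonneg hc hs (hrr_nn ω)) (hf.ne_bot _)).symm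
  have heInt : eInt Q (fun ω => extF f (r ω)) = ((∫ ω, u ω ∂Q : ℝ) : EReal) :=
    (eInt_congr hφeq).trans (eInt_coe_eq_integral Q u hu_int)
  -- the integral of rr
  have h_ofReal_rr : (fun ω => ENNReal.ofReal (rr ω)) =ᵐ[Q] r := by
    filter_upwards [ae_Q_rnRatio_ne_top P Q] with ω hω
    exact ENNReal.ofReal_toReal hω
  set m : ℝ≥0∞ := P {ω | Q.rnDeriv (P + Q) ω = 0} with hm
  have hm_ne_top : m ≠ ⊤ := measure_ne_top _ _
  have hm_le_one : m ≤ 1 := prob_le_one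
  have h_int_rr : ∫ ω, rr ω ∂Q = 1 - m.toReal := by
    rw [integral_eq_lintegral_of_nonneg_ae (ae_of_all _ hrr_nn) hrr_meas.aestronglyMeasurable,
      lintegral_congr_ae h_ofReal_rr, lintegral_rnRatio P Q,
      ENNReal.toReal_sub_of_le hm_le_one (by norm_num)]
    norm_num
  set IG : ℝ≥0∞ := ∫⁻ ω, ENNReal.ofReal (G ω) ∂Q with hIG
  have hIG_ne_top : IG ≠ ⊤ := by
    have := hG_int.2
    rwa [hasFiniteIntegral_iff_ofReal (ae_of_all _ hGnn), lt_top_iff_ne_top] at this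
  have h_int_G : ∫ ω, G ω ∂Q = IG.toReal := by
    rw [integral_eq_lintegral_of_nonneg_ae (ae_of_all _ hGnn) hG_int.aestronglyMeasurable]
  have hG_meas : Measurable G := by
    rw [hG]; exact (measurable_const.add (hrr_meas.const_mul s)).sub hu_meas
  have hint1 : Integrable (fun ω => c + s * rr ω) Q :=
    (integrable_const c).add (hrr_int.const_mul s)
  have h_int_u : ∫ ω, u ω ∂Q = c + s * (1 - m.toReal) - IG.toReal := by
    have husub : ∫ ω, u ω ∂Q = ∫ ω, (c + s * rr ω) ∂Q - ∫ ω, G ω ∂Q := by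
      rw [← integral_sub hint1 hG_int]
      apply integral_congr_ae
      refine ae_of_all _ fun ω => ?_
      rw [hG]; ring
    have hadd : ∫ ω, (c + s * rr ω) ∂Q = c + s * ∫ ω, rr ω ∂Q := by
      rw [integral_add (integrable_const c) (hrr_int.const_mul s), integral_const,
        integral_const_mul]
      simp [measure_univ]
    rw [husub, hadd, h_int_rr, h_int_G]
  -- the mass term
  have hmass : P {ω | r ω = ⊤} = m := P_rnRatio_top P Q
  have hmass' : ((P {ω | r ω = ⊤} : ℝ≥0∞) : EReal) = ((m.toReal : ℝ) : EReal) := by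
    rw [hmass]; exact coe_ennreal_eq_coe_toReal hm_ne_top
  refine ⟨IG, hIG_ne_top, ?_, ?_⟩
  · rw [fDiv, heInt, hmass', hs, ← EReal.coe_mul, ← EReal.coe_add, EReal.coe_eq_coe_iff,
      h_int_u]
    ring
  · intro hIG0
    have h0 : (fun ω => ENNReal.ofReal (G ω)) =ᵐ[Q] 0 :=
      (lintegral_eq_zero_iff' (ENNReal.measurable_ofReal.comp hG_meas).aemeasurable).1 hIG0
    filter_upwards [h0] with ω hω
    have h1 : ENNReal.ofReal (G ω) = 0 := hω
    rw [ENNReal.ofReal_eq_zero] at h1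
    have h2 : G ω = 0 := le_antisymm h1 (hGnn ω)
    rw [hG] at h2
    simp only [hu] at h2 ⊢
    linarith

/-- **Supremum of the `f`-divergence.** For `f ∈ 𝔽` and probability measures `P, Q`:
`D_f(P‖Q) ≤ f(0) + f*(0)`, with equality when `P ⊥ Q`; and if `0 < f(0) + f*(0) < ∞`,
equality holds if and only if `P` and `Q` are mutually singular. -/
theorem fDiv_le_sup_and_eq_iff_mutuallySingular
    {Ω : Type*} [MeasurableSpace Ω] (f : ℝ → EReal) (hf : MemF f)
    (P Q : Measure Ω) [IsProbabilityMeasure P] [IsProbabilityMeasure Q] :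
    fDiv f P Q ≤ f 0 + fStarZero f ∧
    (P.MutuallySingular Q → fDiv f P Q = f 0 + fStarZero f) ∧
    (0 < f 0 + fStarZero f → f 0 + fStarZero f < ⊤ →
      (fDiv f P Q = f 0 + fStarZero f ↔ P.MutuallySingular Q)) := by
  have hne_bot0 : f 0 ≠ ⊥ := hf.ne_bot 0
  have hsne_bot : fStarZero f ≠ ⊥ := hf.fStarZero_ne_bot
  have part2 : P.MutuallySingular Q → fDiv f P Q = f 0 + fStarZero f := by
    intro h
    have hφ : (fun ω => extF f (rnRatio P Q ω)) =ᵐ[Q] fun _ => f 0 := by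
      filter_upwards [sing_rnRatio_zero P Q h] with ω hω
      have h0 : rnRatio P Q ω = 0 := hω
      rw [extF, h0, if_neg (by simp), ENNReal.toReal_zero]
    rw [fDiv, eInt_congr hφ, eInt_const Q (f 0) hne_bot0, sing_P_rnRatio_top P Q h,
      EReal.coe_ennreal_one, mul_one]
  refine ⟨?_, part2, ?_⟩
  · rcases eq_or_ne (f 0) ⊤ with h0 | h0
    · rw [h0, EReal.top_add_of_ne_bot hsne_bot]; exact le_top
    rcases eq_or_ne (fStarZero f) ⊤ with h1 | h1
    · rw [h1, EReal.add_top_of_ne_bot hne_bot0]; exact le_top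
    set c := (f 0).toReal with hcdef
    set s := (fStarZero f).toReal with hsdef
    have hc : f 0 = (c : EReal) := (EReal.coe_toReal h0 hne_bot0).symm
    have hs : fStarZero f = (s : EReal) := (EReal.coe_toReal h1 hsne_bot).symm
    obtain ⟨IG, hIGt, hid, -⟩ := fDiv_finite_identity hf P Q hc hs
    rw [hid, hc, hs, ← EReal.coe_add, EReal.coe_le_coe_iff]
    linarith [ENNReal.toReal_nonneg (a := IG)]
  · intro hpos hlt
    refine ⟨fun heq => ?_, part2⟩
    have h0 : f 0 ≠ ⊤ := by
      intro h; rw [h, EReal.top_add_of_ne_bot hsne_bot] at hlt; exact lt_irrefl _ hlt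
    have h1 : fStarZero f ≠ ⊤ := by
      intro h; rw [h, EReal.add_top_of_ne_bot hne_bot0] at hlt; exact lt_irrefl _ hlt
    set c := (f 0).toReal with hcdef
    set s := (fStarZero f).toReal with hsdef
    have hc : f 0 = (c : EReal) := (EReal.coe_toReal h0 hne_bot0).symm
    have hs : fStarZero f = (s : EReal) := (EReal.coe_toReal h1 hsne_bot).symm
    obtain ⟨IG, hIGt, hid, him⟩ := fDiv_finite_identity hf P Q hc hs
    have hcs : 0 < c + s := by
      rw [hc, hs, ← EReal.coe_add] at hpos
      exact_mod_cast hpos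
    rw [hid, hc, hs, ← EReal.coe_add, EReal.coe_eq_coe_iff] at heq
    have hIG0 : IG = 0 := by
      have h2 : IG.toReal = 0 := by linarith
      exact ((ENNReal.toReal_eq_zero_iff IG).1 h2).resolve_right hIGt
    have hae := him hIG0
    have hae2 : ∀ᵐ ω ∂Q, P.rnDeriv (P + Q) ω = 0 := by
      filter_upwards [hae, ae_Q_rnRatio_ne_top P Q, ae_Q_q_lt_top P Q] with ω h2 h3 h4
      have hrr0 : (rnRatio P Q ω).toReal = 0 := by
        by_contra hne
        have hgt : 0 < (rnRatio P Q ω).toReal :=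
          lt_of_le_of_ne ENNReal.toReal_nonneg (Ne.symm hne)
        have hlt2 := hf.toReal_lt hc hs hcs hgt
        rw [h2] at hlt2
        exact lt_irrefl _ hlt2
      have hr0 : rnRatio P Q ω = 0 := by
        rcases ENNReal.toReal_eq_zero_iff _ |>.1 hrr0 with h | h
        · exact h
        · exact absurd h h3
      rw [rnRatio] at hr0
      rcases ENNReal.div_eq_zero_iff.1 hr0 with h | h
      · exact h
      · exact absurd h h4.ne
    refine ⟨{ω | P.rnDeriv (P + Q) ω = 0},
      Measure.measurable_rnDeriv _ _ (measurableSet_singleton 0), meas_p_zero P Q, ?_⟩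
    rw [ae_iff] at hae2
    exact hae2
end
end

section
/- Let f ∈ 𝔽. For all probability measures P, Q on a measurable space (Ω, 𝓕), the duality D_f(P‖Q) = D_{f*}(Q‖P) holds. -/
open MeasureTheory ProbabilityTheory Filter Set Topology
open scoped ENNReal NNReal

noncomputable section

namespace EReal

@[simp] lemma toENNReal'_top : (⊤ : EReal).toENNReal' = ⊤ := rfl

@[simp] lemma toENNReal'_bot : (⊥ : EReal).toENNReal' = 0 := by
  simp [toENNReal']

@[simp] lemma toENNReal'_coe (x : ℝ) : (x : EReal).toENNReal' = ENNReal.ofReal x := by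
  simp [toENNReal']

lemma measurable_toENNReal' : Measurable EReal.toENNReal' := by
  unfold EReal.toENNReal'
  refine Measurable.ite ?_ measurable_const (measurable_ereal_toReal.ennreal_ofReal)
  exact MeasurableSet.congr (measurableSet_singleton (⊤ : EReal)) (by ext x; simp)

lemma toENNReal'_eq_top_iff {x : EReal} : x.toENNReal' = ⊤ ↔ x = ⊤ := by
  unfold EReal.toENNReal'
  split_ifs with h <;> simp [h, ENNReal.ofReal_ne_top]

lemma toENNReal'_mono {x y : EReal} (h : x ≤ y) : x.toENNReal' ≤ y.toENNReal' := by
  unfold EReal.toENNReal'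
  split_ifs with hx hy hy
  · exact le_rfl
  · exact absurd (top_le_iff.mp (hx ▸ h)) hy
  · exact le_top
  · rcases eq_or_ne x ⊥ with rfl | hxb
    · simp
    · exact ENNReal.ofReal_le_ofReal (EReal.toReal_le_toReal h hxb hy)

lemma toENNReal'_coe_mul {c : ℝ} (hc : 0 < c) (x : EReal) :
    ((c : EReal) * x).toENNReal' = ENNReal.ofReal c * x.toENNReal' := by
  induction x using EReal.rec with
  | bot =>
    rw [EReal.coe_mul_bot_of_pos hc]
    simp
  | coe y =>
    rw [← EReal.coe_mul, toENNReal'_coe, toENNReal'_coe, ← ENNReal.ofReal_mul hc.le]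
  | top =>
    rw [EReal.coe_mul_top_of_pos hc]
    simp [ENNReal.mul_top, (ENNReal.ofReal_pos.mpr hc).ne']

lemma coe_ennreal_fin (y : ℝ≥0∞) (hy : y ≠ ⊤) : (y : EReal) = ((y.toReal : ℝ) : EReal) := by
  lift y to ℝ≥0 using hy
  simp [EReal.coe_nnreal_eq_coe_real]

lemma mul_ennreal_decomp (u : EReal) (hu : u ≠ ⊥) {m : ℝ≥0∞} (hm : m ≠ ⊤) :
    u * (m : EReal)
      = ((u.toENNReal' * m : ℝ≥0∞) : EReal) - (((-u).toENNReal' * m : ℝ≥0∞) : EReal) := by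
  induction u using EReal.rec with
  | bot => exact absurd rfl hu
  | coe y =>
    rw [coe_ennreal_fin m hm, ← EReal.coe_mul, ← EReal.coe_neg, toENNReal'_coe, toENNReal'_coe]
    have h1 : ENNReal.ofReal y * m ≠ ⊤ := ENNReal.mul_ne_top ENNReal.ofReal_ne_top hm
    have h2 : ENNReal.ofReal (-y) * m ≠ ⊤ := ENNReal.mul_ne_top ENNReal.ofReal_ne_top hm
    rw [coe_ennreal_fin _ h1, coe_ennreal_fin _ h2, ← EReal.coe_sub]
    congr 1
    rw [ENNReal.toReal_mul, ENNReal.toReal_mul, ENNReal.toReal_ofReal', ENNReal.toReal_ofReal']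
    rw [← sub_mul, max_zero_sub_max_neg_zero_eq_self]
  | top =>
    rcases eq_or_ne m 0 with rfl | hm0
    · simp
    · have hmpos : (0 : EReal) < (m : EReal) := by
        rw [← EReal.coe_ennreal_zero, EReal.coe_ennreal_lt_coe_ennreal_iff]
        exact pos_iff_ne_zero.mpr hm0
      rw [EReal.top_mul_of_pos hmpos]
      simp [ENNReal.top_mul hm0]

lemma sub_add_sub (x c y d : ℝ≥0∞) (hy : y ≠ ⊤) (hd : d ≠ ⊤) :
    ((x : EReal) - (y : EReal)) + ((c : EReal) - (d : EReal))
      = ((x + c : ℝ≥0∞) : EReal) - ((y + d : ℝ≥0∞) : EReal) := by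
  rw [sub_eq_add_neg, sub_eq_add_neg, sub_eq_add_neg, coe_ennreal_fin y hy, coe_ennreal_fin d hd,
    coe_ennreal_fin (y + d) (by finiteness), ← EReal.coe_neg, ← EReal.coe_neg, ← EReal.coe_neg,
    EReal.coe_ennreal_add, ENNReal.toReal_add hy hd, show -(y.toReal + d.toReal) = -y.toReal + -d.toReal from by ring, EReal.coe_add]
  abel

end EReal

namespace MemF

lemma measurable {f : ℝ → EReal} (hf : MemF f) : Measurable f := by
  apply measurable_of_Iic
  intro c
  induction c using EReal.rec with
  | bot =>
    have : f ⁻¹' Set.Iic (⊥ : EReal) = ∅ := by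
      ext x; simp [Set.mem_preimage, le_bot_iff, hf.ne_bot x]
    rw [this]; exact MeasurableSet.empty
  | top =>
    have : f ⁻¹' Set.Iic (⊤ : EReal) = Set.univ := by
      ext x; simp [Set.mem_preimage, le_top]
    rw [this]; exact MeasurableSet.univ
  | coe c =>
    refine Set.OrdConnected.measurableSet ⟨fun x hx y hy z hz => ?_⟩
    simp only [Set.mem_preimage, Set.mem_Iic] at hx hy ⊢
    have hxt : f x ≠ ⊤ := fun h => (EReal.coe_ne_top c) (top_le_iff.mp (h ▸ hx))
    have hyt : f y ≠ ⊤ := fun h => (EReal.coe_ne_top c) (top_le_iff.mp (h ▸ hy))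
    have hax : ((f x).toReal : EReal) = f x := EReal.coe_toReal hxt (hf.ne_bot x)
    have hbx : ((f y).toReal : EReal) = f y := EReal.coe_toReal hyt (hf.ne_bot y)
    have hac : (f x).toReal ≤ c := by rw [← EReal.coe_le_coe_iff, hax]; exact hx
    have hbc : (f y).toReal ≤ c := by rw [← EReal.coe_le_coe_iff, hbx]; exact hy
    rcases eq_or_lt_of_le (hz.1.trans hz.2) with heq | hlt
    · have hzx : z = x := le_antisymm (heq ▸ hz.2) hz.1
      rw [hzx]; exact hx
    · set α := (y - z) / (y - x) with hα
      have hyx : (0:ℝ) < y - x := by linarith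
      have hα0 : 0 ≤ α := div_nonneg (by linarith [hz.2]) hyx.le
      have hα1 : α ≤ 1 := by rw [hα, div_le_one hyx]; linarith [hz.1]
      have hzc : α * x + (1 - α) * y = z := by
        rw [hα]; field_simp; ring
      have hcvx := hf.convex x y α hα0 hα1
      rw [hzc] at hcvx
      refine hcvx.trans ?_
      rw [← hax, ← hbx, ← EReal.coe_mul, ← EReal.coe_mul, ← EReal.coe_add, EReal.coe_le_coe_iff]
      nlinarith [mul_le_mul_of_nonneg_left hac hα0,
        mul_le_mul_of_nonneg_left hbc (by linarith : (0:ℝ) ≤ 1 - α)]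

lemma minorant {f : ℝ → EReal} (hf : MemF f) :
    ∃ M : ℝ, 0 ≤ M ∧ ∀ x : ℝ, 0 ≤ x → ((-(M * x + M) : ℝ) : EReal) ≤ f x := by
  obtain ⟨ε, hε, hdom⟩ := hf.one_mem_interior_dom
  set δ := min (ε / 2) (1 / 2) with hδdef
  have hδ : 0 < δ := lt_min (half_pos hε) one_half_pos
  have hδ1 : δ ≤ 1 / 2 := min_le_right _ _
  have hδε : δ < ε := lt_of_le_of_lt (min_le_left _ _) (by linarith)
  have h1 : |(1 - δ) - 1| < ε := by rw [abs_of_nonpos (by linarith)]; linarith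
  have h2 : |(1 + δ) - 1| < ε := by rw [abs_of_nonneg (by linarith)]; linarith
  have hLne : f (1 - δ) ≠ ⊤ := hdom _ h1
  have hKne : f (1 + δ) ≠ ⊤ := hdom _ h2
  have hl : ((f (1 - δ)).toReal : EReal) = f (1 - δ) := EReal.coe_toReal hLne (hf.ne_bot _)
  have hk : ((f (1 + δ)).toReal : EReal) = f (1 + δ) := EReal.coe_toReal hKne (hf.ne_bot _)
  set l := (f (1 - δ)).toReal with hldef
  set k := (f (1 + δ)).toReal with hkdef
  set M := (|l| + |k|) / δ + 1 with hMdef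
  have hM0 : (0:ℝ) ≤ M := by positivity
  have hdM : δ * M = |l| + |k| + δ := by rw [hMdef]; field_simp
  refine ⟨M, hM0, fun x hx => ?_⟩
  by_cases hfx : f x = ⊤
  · rw [hfx]; exact le_top
  have hy : ((f x).toReal : EReal) = f x := EReal.coe_toReal hfx (hf.ne_bot x)
  set y := (f x).toReal with hydef
  rw [← hy, EReal.coe_le_coe_iff]
  rcases lt_or_ge x 1 with hx1 | hx1
  · have hden : (0:ℝ) < 1 + δ - x := by linarith
    set γ := δ / (1 + δ - x) with hγdef
    have hγ0 : 0 < γ := div_pos hδ hden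
    have hγ1 : γ ≤ 1 := by rw [hγdef, div_le_one hden]; linarith
    have hγc : γ * (1 + δ - x) = δ := div_mul_cancel₀ _ hden.ne'
    have hcomb : γ * x + (1 - γ) * (1 + δ) = 1 := by linear_combination -hγc
    have hcvx := hf.convex x (1 + δ) γ hγ0.le hγ1
    rw [hcomb, hf.one_eq_zero] at hcvx
    rw [← hy, ← hk, ← EReal.coe_mul, ← EReal.coe_mul, ← EReal.coe_add] at hcvx
    have hcvx' : (0:ℝ) ≤ γ * y + (1 - γ) * k := by
      rw [← EReal.coe_le_coe_iff]; exact_mod_cast hcvx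
    have key : 0 ≤ δ * y + (1 - x) * k := by
      have h := mul_nonneg hcvx' hden.le
      have e1 : (γ * y + (1 - γ) * k) * (1 + δ - x) = δ * y + (1 - x) * k := by
        linear_combination (y - k) * hγc
      rw [e1] at h; exact h
    have hk1 : (1 - x) * k ≤ (1 - x) * |k| :=
      mul_le_mul_of_nonneg_left (le_abs_self k) (by linarith)
    have hk2 : (1 - x) * |k| ≤ (1 + x) * |k| :=
      mul_le_mul_of_nonneg_right (by linarith) (abs_nonneg k)
    have hdMx : δ * (M * x + M) = (|l| + |k| + δ) * (x + 1) := by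
      linear_combination (x + 1) * hdM
    have h5 : 0 ≤ δ * (y + (M * x + M)) := by
      have hl1 : 0 ≤ |l| * (x + 1) := by positivity
      have hd1 : 0 ≤ δ * (x + 1) := by positivity
      nlinarith [key, hk1, hk2, hdMx, hl1, hd1]
    have h6 := (mul_nonneg_iff_of_pos_left hδ).mp h5
    linarith
  · have hden : (0:ℝ) < x - 1 + δ := by linarith
    set γ := δ / (x - 1 + δ) with hγdef
    have hγ0 : 0 < γ := div_pos hδ hden
    have hγ1 : γ ≤ 1 := by rw [hγdef, div_le_one hden]; linarith
    have hγc : γ * (x - 1 + δ) = δ := div_mul_cancel₀ _ hden.ne'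
    have hcomb : γ * x + (1 - γ) * (1 - δ) = 1 := by linear_combination hγc
    have hcvx := hf.convex x (1 - δ) γ hγ0.le hγ1
    rw [hcomb, hf.one_eq_zero] at hcvx
    rw [← hy, ← hl, ← EReal.coe_mul, ← EReal.coe_mul, ← EReal.coe_add] at hcvx
    have hcvx' : (0:ℝ) ≤ γ * y + (1 - γ) * l := by
      rw [← EReal.coe_le_coe_iff]; exact_mod_cast hcvx
    have key : 0 ≤ δ * y + (x - 1) * l := by
      have h := mul_nonneg hcvx' hden.le
      have e1 : (γ * y + (1 - γ) * l) * (x - 1 + δ) = δ * y + (x - 1) * l := by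
        linear_combination (y - l) * hγc
      rw [e1] at h; exact h
    have hk1 : (x - 1) * l ≤ (x - 1) * |l| :=
      mul_le_mul_of_nonneg_left (le_abs_self l) (by linarith)
    have hk2 : (x - 1) * |l| ≤ (x + 1) * |l| :=
      mul_le_mul_of_nonneg_right (by linarith) (abs_nonneg l)
    have hdMx : δ * (M * x + M) = (|l| + |k| + δ) * (x + 1) := by
      linear_combination (x + 1) * hdM
    have h5 : 0 ≤ δ * (y + (M * x + M)) := by
      have hl1 : 0 ≤ |k| * (x + 1) := by positivity
      have hd1 : 0 ≤ δ * (x + 1) := by positivity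
      nlinarith [key, hk1, hk2, hdMx, hl1, hd1]
    have h6 := (mul_nonneg_iff_of_pos_left hδ).mp h5
    linarith

lemma fStarZero_ne_bot_s4 {f : ℝ → EReal} (hf : MemF f) : fStarZero f ≠ ⊥ := by
  obtain ⟨M, hM, hmin⟩ := hf.minorant
  have h2 : ∀ᶠ t : ℝ in atTop, ((-(2 * M) : ℝ) : EReal) ≤ ((t⁻¹ : ℝ) : EReal) * f t := by
    filter_upwards [eventually_ge_atTop (1:ℝ)] with t ht
    have ht0 : (0:ℝ) < t := lt_of_lt_of_le one_pos ht
    by_cases hft : f t = ⊤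
    · rw [hft, EReal.coe_mul_top_of_pos (inv_pos.mpr ht0)]; exact le_top
    · have hy : ((f t).toReal : EReal) = f t := EReal.coe_toReal hft (hf.ne_bot t)
      rw [← hy, ← EReal.coe_mul, EReal.coe_le_coe_iff]
      have hm := hmin t ht0.le
      rw [← hy, EReal.coe_le_coe_iff] at hm
      have h5 : t⁻¹ * t = 1 := inv_mul_cancel₀ ht0.ne'
      have h6 : t⁻¹ ≤ 1 := by
        nlinarith [mul_nonneg (inv_nonneg.mpr ht0.le) (by linarith : (0:ℝ) ≤ t - 1)]
      have h4 : t⁻¹ * -(M * t + M) ≤ t⁻¹ * (f t).toReal :=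
        mul_le_mul_of_nonneg_left hm (inv_nonneg.mpr ht0.le)
      nlinarith [mul_nonneg hM (inv_nonneg.mpr ht0.le)]
  have h1 : ((-(2 * M) : ℝ) : EReal) ≤ fStarZero f := by
    rw [fStarZero, ← limsup_const (f := (atTop : Filter ℝ)) ((-(2 * M) : ℝ) : EReal)]
    exact limsup_le_limsup h2
  intro h
  rw [h, le_bot_iff] at h1
  exact EReal.coe_ne_bot _ h1

lemma fStarZero_conj {f : ℝ → EReal} (hf : MemF f) : fStarZero (fConj f) = f 0 := by
  have h1 : ∀ᶠ t : ℝ in atTop, ((t⁻¹ : ℝ) : EReal) * fConj f t = f t⁻¹ := by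
    filter_upwards [eventually_gt_atTop (0:ℝ)] with t ht
    rw [fConj]
    simp only [if_pos ht]
    by_cases hft : f t⁻¹ = ⊤
    · rw [hft, EReal.coe_mul_top_of_pos ht, EReal.coe_mul_top_of_pos (inv_pos.mpr ht)]
    · have hy : ((f t⁻¹).toReal : EReal) = f t⁻¹ := EReal.coe_toReal hft (hf.ne_bot _)
      rw [← hy, ← EReal.coe_mul, ← EReal.coe_mul,
        show t⁻¹ * (t * (f t⁻¹).toReal) = (f t⁻¹).toReal from by field_simp]
  rw [fStarZero, limsup_congr h1]
  have ht : Tendsto (fun t : ℝ => t⁻¹) atTop (nhdsWithin 0 (Set.Ioi 0)) := by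
    apply tendsto_nhdsWithin_of_tendsto_nhds_of_eventually_within _ tendsto_inv_atTop_zero
    filter_upwards [eventually_gt_atTop (0:ℝ)] with t ht using Set.mem_Ioi.mpr (inv_pos.mpr ht)
  exact (hf.right_continuous_at_zero.comp ht).limsup_eq

end MemF

set_option maxHeartbeats 1000000 in
/-- **Duality of the `f`-divergence.** For `f ∈ 𝔽` and probability measures `P, Q` on a
measurable space, `D_f(P‖Q) = D_{f*}(Q‖P)`. -/
theorem fDiv_duality
    {Ω : Type*} [MeasurableSpace Ω] (f : ℝ → EReal) (hf : MemF f)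
    (P Q : Measure Ω) [IsProbabilityMeasure P] [IsProbabilityMeasure Q] :
    fDiv f P Q = fDiv (fConj f) Q P := by
  classical
  obtain ⟨M, hM0, hMmin⟩ := hf.minorant
  have hPμ : P ≪ P + Q := Measure.absolutelyContinuous_of_le (Measure.le_add_right le_rfl)
  have hQμ : Q ≪ P + Q := Measure.absolutelyContinuous_of_le (Measure.le_add_left le_rfl)
  set μ : Measure Ω := P + Q with hμdef
  set p : Ω → ℝ≥0∞ := P.rnDeriv μ with hpdef
  set q : Ω → ℝ≥0∞ := Q.rnDeriv μ with hqdef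
  have hpm : Measurable p := Measure.measurable_rnDeriv P μ
  have hqm : Measurable q := Measure.measurable_rnDeriv Q μ
  have hPd : μ.withDensity p = P := Measure.withDensity_rnDeriv_eq P μ hPμ
  have hQd : μ.withDensity q = Q := Measure.withDensity_rnDeriv_eq Q μ hQμ
  have hpfin : ∀ᵐ ω ∂μ, p ω < ⊤ := Measure.rnDeriv_lt_top P μ
  have hqfin : ∀ᵐ ω ∂μ, q ω < ⊤ := Measure.rnDeriv_lt_top Q μ
  have hppos : ∀ᵐ ω ∂P, 0 < p ω := Measure.rnDeriv_pos hPμ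
  have hqpos : ∀ᵐ ω ∂Q, 0 < q ω := Measure.rnDeriv_pos hQμ
  have hrr : rnRatio P Q = fun ω => p ω / q ω := rfl
  have hss : rnRatio Q P = fun ω => q ω / p ω := by
    unfold rnRatio
    rw [add_comm Q P]
  -- sets
  set A : Set Ω := {ω | 0 < p ω} ∩ {ω | 0 < q ω} with hAdef
  set B : Set Ω := {ω | q ω = 0} ∩ {ω | 0 < p ω} with hBdef
  set C : Set Ω := {ω | p ω = 0} ∩ {ω | 0 < q ω} with hCdef
  have hAm : MeasurableSet A :=
    (measurableSet_lt measurable_const hpm).inter (measurableSet_lt measurable_const hqm)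
  have hBm : MeasurableSet B :=
    (hqm (measurableSet_singleton 0)).inter (measurableSet_lt measurable_const hpm)
  have hCm : MeasurableSet C :=
    (hpm (measurableSet_singleton 0)).inter (measurableSet_lt measurable_const hqm)
  -- the main measurable integrands
  have hGm : Measurable fun ω => f (p ω / q ω).toReal :=
    hf.measurable.comp ((hpm.div hqm).ennreal_toReal)
  have hΦpm : Measurable fun ω => (f (p ω / q ω).toReal).toENNReal' :=
    EReal.measurable_toENNReal'.comp hGm
  have hΦmm : Measurable fun ω => (-(f (p ω / q ω).toReal)).toENNReal' :=
    EReal.measurable_toENNReal'.comp hGm.neg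
  -- pointwise identities
  have keyIp : ∀ᵐ ω ∂μ, q ω * (extF f (p ω / q ω)).toENNReal'
      = A.indicator (fun ω => q ω * (f (p ω / q ω).toReal).toENNReal') ω
        + C.indicator (fun ω => q ω * (f 0).toENNReal') ω := by
    filter_upwards [hpfin, hqfin] with ω hpω hqω
    by_cases hq0 : q ω = 0
    · have hA : ω ∉ A := fun h => absurd h.2 (by simp [hq0])
      have hC : ω ∉ C := fun h => absurd h.2 (by simp [hq0])
      rw [Set.indicator_of_notMem hA, Set.indicator_of_notMem hC, hq0, zero_mul, zero_add]
    · have hq0' : 0 < q ω := pos_iff_ne_zero.mpr hq0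
      have hrfin : p ω / q ω ≠ ⊤ := by
        intro h
        rcases ENNReal.div_eq_top.mp h with ⟨-, h2⟩ | ⟨h1, -⟩
        exacts [hq0 h2, hpω.ne h1]
      have hext : extF f (p ω / q ω) = f (p ω / q ω).toReal := by
        simp only [extF, if_neg hrfin]
      by_cases hp0 : p ω = 0
      · have hA : ω ∉ A := fun h => absurd h.1 (by simp [hp0])
        have hC : ω ∈ C := ⟨hp0, hq0'⟩
        rw [Set.indicator_of_notMem hA, Set.indicator_of_mem hC, hext, zero_add]
        congr 2
        simp [hp0]
      · have hA : ω ∈ A := ⟨pos_iff_ne_zero.mpr hp0, hq0'⟩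
        have hC : ω ∉ C := fun h => hp0 h.1
        rw [Set.indicator_of_mem hA, Set.indicator_of_notMem hC, hext, add_zero]
  have keyIm : ∀ᵐ ω ∂μ, q ω * (-(extF f (p ω / q ω))).toENNReal'
      = A.indicator (fun ω => q ω * (-(f (p ω / q ω).toReal)).toENNReal') ω
        + C.indicator (fun ω => q ω * (-(f 0)).toENNReal') ω := by
    filter_upwards [hpfin, hqfin] with ω hpω hqω
    by_cases hq0 : q ω = 0
    · have hA : ω ∉ A := fun h => absurd h.2 (by simp [hq0])
      have hC : ω ∉ C := fun h => absurd h.2 (by simp [hq0])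
      rw [Set.indicator_of_notMem hA, Set.indicator_of_notMem hC, hq0, zero_mul, zero_add]
    · have hq0' : 0 < q ω := pos_iff_ne_zero.mpr hq0
      have hrfin : p ω / q ω ≠ ⊤ := by
        intro h
        rcases ENNReal.div_eq_top.mp h with ⟨-, h2⟩ | ⟨h1, -⟩
        exacts [hq0 h2, hpω.ne h1]
      have hext : extF f (p ω / q ω) = f (p ω / q ω).toReal := by
        simp only [extF, if_neg hrfin]
      by_cases hp0 : p ω = 0
      · have hA : ω ∉ A := fun h => absurd h.1 (by simp [hp0])
        have hC : ω ∈ C := ⟨hp0, hq0'⟩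
        rw [Set.indicator_of_notMem hA, Set.indicator_of_mem hC, hext, zero_add]
        congr 3
        simp [hp0]
      · have hA : ω ∈ A := ⟨pos_iff_ne_zero.mpr hp0, hq0'⟩
        have hC : ω ∉ C := fun h => hp0 h.1
        rw [Set.indicator_of_mem hA, Set.indicator_of_notMem hC, hext, add_zero]
  have keyIIp : ∀ᵐ ω ∂μ, p ω * (extF (fConj f) (q ω / p ω)).toENNReal'
      = A.indicator (fun ω => q ω * (f (p ω / q ω).toReal).toENNReal') ω
        + B.indicator (fun ω => p ω * (fStarZero f).toENNReal') ω := by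
    filter_upwards [hpfin, hqfin] with ω hpω hqω
    by_cases hp0 : p ω = 0
    · have hA : ω ∉ A := fun h => absurd h.1 (by simp [hp0])
      have hB : ω ∉ B := fun h => absurd h.2 (by simp [hp0])
      rw [Set.indicator_of_notMem hA, Set.indicator_of_notMem hB, hp0, zero_mul, zero_add]
    · have hp0' : 0 < p ω := pos_iff_ne_zero.mpr hp0
      have hsfin : q ω / p ω ≠ ⊤ := by
        intro h
        rcases ENNReal.div_eq_top.mp h with ⟨-, h2⟩ | ⟨h1, -⟩
        exacts [hp0 h2, hqω.ne h1]
      have hext : extF (fConj f) (q ω / p ω) = fConj f ((q ω / p ω).toReal) := by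
        simp only [extF, if_neg hsfin]
      by_cases hq0 : q ω = 0
      · have hA : ω ∉ A := fun h => absurd h.2 (by simp [hq0])
        have hB : ω ∈ B := ⟨hq0, hp0'⟩
        have hs0 : q ω / p ω = 0 := by rw [hq0, ENNReal.zero_div]
        rw [Set.indicator_of_notMem hA, Set.indicator_of_mem hB, hext, hs0, zero_add]
        congr 2
        simp [fConj]
      · have hA : ω ∈ A := ⟨hp0', pos_iff_ne_zero.mpr hq0⟩
        have hB : ω ∉ B := fun h => hq0 h.1
        have hsne : q ω / p ω ≠ 0 := by
          intro h
          rcases ENNReal.div_eq_zero_iff.mp h with h1 | h1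
          exacts [hq0 h1, hpω.ne h1]
        have hst : 0 < (q ω / p ω).toReal := ENNReal.toReal_pos hsne hsfin
        have hinv : ((q ω / p ω).toReal)⁻¹ = (p ω / q ω).toReal := by
          rw [ENNReal.toReal_div, ENNReal.toReal_div, inv_div]
        rw [Set.indicator_of_mem hA, Set.indicator_of_notMem hB, hext, add_zero]
        simp only [fConj, if_pos hst]
        rw [hinv, EReal.toENNReal'_coe_mul hst, ENNReal.ofReal_toReal hsfin, ← mul_assoc,
          ENNReal.mul_div_cancel hp0 hpω.ne]
  have keyIIm : ∀ᵐ ω ∂μ, p ω * (-(extF (fConj f) (q ω / p ω))).toENNReal'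
      = A.indicator (fun ω => q ω * (-(f (p ω / q ω).toReal)).toENNReal') ω
        + B.indicator (fun ω => p ω * (-(fStarZero f)).toENNReal') ω := by
    filter_upwards [hpfin, hqfin] with ω hpω hqω
    by_cases hp0 : p ω = 0
    · have hA : ω ∉ A := fun h => absurd h.1 (by simp [hp0])
      have hB : ω ∉ B := fun h => absurd h.2 (by simp [hp0])
      rw [Set.indicator_of_notMem hA, Set.indicator_of_notMem hB, hp0, zero_mul, zero_add]
    · have hp0' : 0 < p ω := pos_iff_ne_zero.mpr hp0
      have hsfin : q ω / p ω ≠ ⊤ := by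
        intro h
        rcases ENNReal.div_eq_top.mp h with ⟨-, h2⟩ | ⟨h1, -⟩
        exacts [hp0 h2, hqω.ne h1]
      have hext : extF (fConj f) (q ω / p ω) = fConj f ((q ω / p ω).toReal) := by
        simp only [extF, if_neg hsfin]
      by_cases hq0 : q ω = 0
      · have hA : ω ∉ A := fun h => absurd h.2 (by simp [hq0])
        have hB : ω ∈ B := ⟨hq0, hp0'⟩
        have hs0 : q ω / p ω = 0 := by rw [hq0, ENNReal.zero_div]
        rw [Set.indicator_of_notMem hA, Set.indicator_of_mem hB, hext, hs0, zero_add]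
        congr 3
        simp [fConj]
      · have hA : ω ∈ A := ⟨hp0', pos_iff_ne_zero.mpr hq0⟩
        have hB : ω ∉ B := fun h => hq0 h.1
        have hsne : q ω / p ω ≠ 0 := by
          intro h
          rcases ENNReal.div_eq_zero_iff.mp h with h1 | h1
          exacts [hq0 h1, hpω.ne h1]
        have hst : 0 < (q ω / p ω).toReal := ENNReal.toReal_pos hsne hsfin
        have hinv : ((q ω / p ω).toReal)⁻¹ = (p ω / q ω).toReal := by
          rw [ENNReal.toReal_div, ENNReal.toReal_div, inv_div]
        rw [Set.indicator_of_mem hA, Set.indicator_of_notMem hB, hext, add_zero]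
        simp only [fConj, if_pos hst]
        rw [hinv, ← mul_neg, EReal.toENNReal'_coe_mul hst, ENNReal.ofReal_toReal hsfin,
          ← mul_assoc, ENNReal.mul_div_cancel hp0 hpω.ne]
  -- generic integral computation
  have calc1 : ∀ (g : Ω → ℝ≥0∞) (d : Ω → ℝ≥0∞), Measurable d → (∀ᵐ ω ∂μ, d ω < ⊤) →
      ∀ (ν : Measure Ω), μ.withDensity d = ν →
      ∀ (F : Ω → ℝ≥0∞), Measurable F → ∀ (c : ℝ≥0∞) (S : Set Ω), MeasurableSet S →
      (∀ᵐ ω ∂μ, d ω * g ω = A.indicator F ω + S.indicator (fun ω => d ω * c) ω) →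
      ∫⁻ ω, g ω ∂ν = (∫⁻ ω, A.indicator F ω ∂μ) + c * ν S := by
    intro g d hd hdfin ν hν F hF c S hS hae
    rw [← hν, lintegral_withDensity_eq_lintegral_mul_non_measurable μ hd hdfin]
    simp only [Pi.mul_apply]
    rw [lintegral_congr_ae hae, lintegral_add_left (hF.indicator hAm)]
    congr 1
    rw [lintegral_indicator hS, lintegral_mul_const c hd, ← withDensity_apply d hS, hν, mul_comm]
  -- the four integrals
  set a : ℝ≥0∞ :=
    ∫⁻ ω, A.indicator (fun ω => q ω * (f (p ω / q ω).toReal).toENNReal') ω ∂μ with hadef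
  set a' : ℝ≥0∞ :=
    ∫⁻ ω, A.indicator (fun ω => q ω * (-(f (p ω / q ω).toReal)).toENNReal') ω ∂μ with ha'def
  have hI1 : ∫⁻ ω, (extF f (rnRatio P Q ω)).toENNReal' ∂Q = a + (f 0).toENNReal' * Q C := by
    rw [hrr, hadef]
    exact calc1 _ q hqm hqfin Q hQd _ (hqm.mul hΦpm) _ C hCm keyIp
  have hI2 : ∫⁻ ω, (-(extF f (rnRatio P Q ω))).toENNReal' ∂Q
      = a' + (-(f 0)).toENNReal' * Q C := by
    rw [hrr, ha'def]
    exact calc1 _ q hqm hqfin Q hQd _ (hqm.mul hΦmm) _ C hCm keyIm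
  have hII1 : ∫⁻ ω, (extF (fConj f) (rnRatio Q P ω)).toENNReal' ∂P
      = a + (fStarZero f).toENNReal' * P B := by
    rw [hss, hadef]
    exact calc1 _ p hpm hpfin P hPd _ (hqm.mul hΦpm) _ B hBm keyIIp
  have hII2 : ∫⁻ ω, (-(extF (fConj f) (rnRatio Q P ω))).toENNReal' ∂P
      = a' + (-(fStarZero f)).toENNReal' * P B := by
    rw [hss, ha'def]
    exact calc1 _ p hpm hpfin P hPd _ (hqm.mul hΦmm) _ B hBm keyIIm
  -- finiteness of a'
  have ha'fin : a' ≠ ⊤ := by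
    have hbound : ∀ᵐ ω ∂μ,
        A.indicator (fun ω => q ω * (-(f (p ω / q ω).toReal)).toENNReal') ω
          ≤ ENNReal.ofReal M * p ω + ENNReal.ofReal M * q ω := by
      filter_upwards [hpfin, hqfin] with ω hpω hqω
      by_cases hA : ω ∈ A
      · rw [Set.indicator_of_mem hA]
        have hq0 : q ω ≠ 0 := hA.2.ne'
        have hrfin : p ω / q ω ≠ ⊤ := by
          intro h
          rcases ENNReal.div_eq_top.mp h with ⟨-, h2⟩ | ⟨h1, -⟩
          exacts [hq0 h2, hpω.ne h1]
        have hrr0 : (0:ℝ) ≤ (p ω / q ω).toReal := ENNReal.toReal_nonneg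
        have hneg : -(f (p ω / q ω).toReal)
            ≤ ((M * (p ω / q ω).toReal + M : ℝ) : EReal) := by
          rw [EReal.neg_le, ← EReal.coe_neg]
          exact hMmin _ hrr0
        have h1 : (-(f (p ω / q ω).toReal)).toENNReal'
            ≤ ENNReal.ofReal (M * (p ω / q ω).toReal + M) := by
          have := EReal.toENNReal'_mono hneg
          rwa [EReal.toENNReal'_coe] at this
        have h2 : ENNReal.ofReal (M * (p ω / q ω).toReal + M)
            ≤ ENNReal.ofReal M * (p ω / q ω) + ENNReal.ofReal M := by
          rw [ENNReal.ofReal_add (by positivity) hM0, ENNReal.ofReal_mul hM0,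
            ENNReal.ofReal_toReal hrfin]
        calc q ω * (-(f (p ω / q ω).toReal)).toENNReal'
            ≤ q ω * (ENNReal.ofReal M * (p ω / q ω) + ENNReal.ofReal M) :=
              mul_le_mul_right (h1.trans h2) _
          _ = ENNReal.ofReal M * (q ω * (p ω / q ω)) + ENNReal.ofReal M * q ω := by ring
          _ = ENNReal.ofReal M * p ω + ENNReal.ofReal M * q ω := by
              rw [ENNReal.mul_div_cancel hq0 hqω.ne]
      · rw [Set.indicator_of_notMem hA]
        exact zero_le
    have hip : ∫⁻ ω, p ω ∂μ = 1 := by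
      rw [← setLIntegral_univ, ← withDensity_apply p MeasurableSet.univ, hPd, measure_univ]
    have hiq : ∫⁻ ω, q ω ∂μ = 1 := by
      rw [← setLIntegral_univ, ← withDensity_apply q MeasurableSet.univ, hQd, measure_univ]
    have hle : a' ≤ ENNReal.ofReal M * (∫⁻ ω, p ω ∂μ) + ENNReal.ofReal M * (∫⁻ ω, q ω ∂μ) := by
      rw [ha'def, ← lintegral_const_mul _ hpm, ← lintegral_const_mul _ hqm,
        ← lintegral_add_left (hpm.const_mul _)]
      exact lintegral_mono_ae hbound
    refine ne_top_of_le_ne_top ?_ hle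
    rw [hip, hiq]
    finiteness
  -- identification of the singular sets
  have hPB : P {ω | rnRatio P Q ω = ⊤} = P B := by
    apply measure_congr
    rw [Filter.eventuallyEq_set]
    filter_upwards [hPμ.ae_le hpfin, hPμ.ae_le hqfin, hppos] with ω hpω hqω hpos
    simp only [Set.mem_setOf_eq, hrr]
    constructor
    · intro h
      rcases ENNReal.div_eq_top.mp h with ⟨-, h2⟩ | ⟨h1, -⟩
      · exact ⟨h2, hpos⟩
      · exact absurd h1 hpω.ne
    · intro ⟨h1, h2⟩
      rw [ENNReal.div_eq_top]
      exact Or.inl ⟨h2.ne', h1⟩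
  have hQC : Q {ω | rnRatio Q P ω = ⊤} = Q C := by
    apply measure_congr
    rw [Filter.eventuallyEq_set]
    filter_upwards [hQμ.ae_le hpfin, hQμ.ae_le hqfin, hqpos] with ω hpω hqω hpos
    simp only [Set.mem_setOf_eq, hss]
    constructor
    · intro h
      rcases ENNReal.div_eq_top.mp h with ⟨-, h2⟩ | ⟨h1, -⟩
      · exact ⟨h2, hpos⟩
      · exact absurd h1 hqω.ne
    · intro ⟨h1, h2⟩
      rw [ENNReal.div_eq_top]
      exact Or.inl ⟨h2.ne', h1⟩
  -- put everything together
  have hune : f 0 ≠ ⊥ := hf.ne_bot 0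
  have hvne : fStarZero f ≠ ⊥ := hf.fStarZero_ne_bot_s4
  have humfin : (-(f 0)).toENNReal' ≠ ⊤ := by
    rw [Ne, EReal.toENNReal'_eq_top_iff]
    simp [hune]
  have hvmfin : (-(fStarZero f)).toENNReal' ≠ ⊤ := by
    rw [Ne, EReal.toENNReal'_eq_top_iff]
    simp [hvne]
  have hfin1 : a' + (-(f 0)).toENNReal' * Q C ≠ ⊤ :=
    ENNReal.add_ne_top.mpr ⟨ha'fin, ENNReal.mul_ne_top humfin (measure_ne_top Q C)⟩
  have hfin2 : (-(fStarZero f)).toENNReal' * P B ≠ ⊤ :=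
    ENNReal.mul_ne_top hvmfin (measure_ne_top P B)
  have hfin3 : a' + (-(fStarZero f)).toENNReal' * P B ≠ ⊤ :=
    ENNReal.add_ne_top.mpr ⟨ha'fin, hfin2⟩
  have hfin4 : (-(f 0)).toENNReal' * Q C ≠ ⊤ :=
    ENNReal.mul_ne_top humfin (measure_ne_top Q C)
  unfold fDiv
  rw [hf.fStarZero_conj, hPB, hQC]
  unfold eInt
  rw [hI1, hI2, hII1, hII2,
    EReal.mul_ennreal_decomp (fStarZero f) hvne (measure_ne_top P B),
    EReal.mul_ennreal_decomp (f 0) hune (measure_ne_top Q C),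
    EReal.sub_add_sub _ _ _ _ hfin1 hfin2, EReal.sub_add_sub _ _ _ _ hfin3 hfin4]
  rw [show a + (f 0).toENNReal' * Q C + (fStarZero f).toENNReal' * P B
      = a + (fStarZero f).toENNReal' * P B + (f 0).toENNReal' * Q C by ring,
    show a' + (-(f 0)).toENNReal' * Q C + (-(fStarZero f)).toENNReal' * P B
      = a' + (-(fStarZero f)).toENNReal' * P B + (-(f 0)).toENNReal' * Q C by ring]
end
end

section
/- Let f ∈ 𝔽. Then f(0) + f*(0) ∈ [0, +∞], and f(0) + f*(0) = 0 if and only if f is affine on [0, ∞), i.e. f(t) = c(t − 1) on [0, ∞) for some c ∈ ℝ. -/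
open MeasureTheory ProbabilityTheory Filter Set Topology
open scoped ENNReal NNReal

noncomputable section

section Aux

variable {f : ℝ → EReal}

private lemma real_le_of_forall_pos {u v : ℝ} (h : ∀ ε : ℝ, 0 < ε → u ≤ v + ε) : u ≤ v := by
  by_contra hlt
  push_neg at hlt
  have := h ((u - v) / 2) (by linarith)
  linarith

private lemma ereal_exists_real (x : EReal) (h1 : x ≠ ⊥) (h2 : x ≠ ⊤) :
    ∃ r : ℝ, x = (r : EReal) := by
  lift x to ℝ using ⟨h2, h1⟩
  exact ⟨x, rfl⟩

private lemma conv_le (hf : MemF f) {x y α u v : ℝ} (hα0 : 0 ≤ α) (hα1 : α ≤ 1)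
    (hx : f x = (u : EReal)) (hy : f y = (v : EReal)) :
    f (α * x + (1 - α) * y) ≤ ((α * u + (1 - α) * v : ℝ) : EReal) := by
  have h := hf.convex x y α hα0 hα1
  rw [hx, hy, ← EReal.coe_mul, ← EReal.coe_mul, ← EReal.coe_add] at h
  exact h

private lemma conv_one (hf : MemF f) {x y α u v : ℝ} (hα0 : 0 ≤ α) (hα1 : α ≤ 1)
    (hx : f x = (u : EReal)) (hy : f y = (v : EReal)) (hc : α * x + (1 - α) * y = 1) :
    0 ≤ α * u + (1 - α) * v := by
  have h := conv_le hf hα0 hα1 hx hy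
  rw [hc, hf.one_eq_zero] at h
  exact_mod_cast h

/-- Convexity through the point `1`, cleared of denominators. -/
private lemma conv_one_real (hf : MemF f) {x y u v : ℝ} (hx1 : x < 1) (h1y : 1 < y)
    (hx : f x = (u : EReal)) (hy : f y = (v : EReal)) :
    0 ≤ (y - 1) * u + (1 - x) * v := by
  have hxy : 0 < y - x := by linarith
  have hα0 : 0 ≤ (y - 1) / (y - x) := div_nonneg (by linarith) hxy.le
  have hα1 : (y - 1) / (y - x) ≤ 1 := by rw [div_le_one hxy]; linarith
  have hcomb : (y - 1) / (y - x) * x + (1 - (y - 1) / (y - x)) * y = 1 := by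
    field_simp
    ring
  have hk := conv_one hf hα0 hα1 hx hy hcomb
  have h1α : 1 - (y - 1) / (y - x) = (1 - x) / (y - x) := by
    field_simp
    ring
  rw [h1α] at hk
  have h2 := mul_nonneg hxy.le hk
  have heq : (y - x) * ((y - 1) / (y - x) * u + (1 - x) / (y - x) * v)
      = (y - 1) * u + (1 - x) * v := by
    field_simp
  linarith [heq ▸ h2]

/-- Convexity between `0` and `T`. -/
private lemma conv_le_real (hf : MemF f) {t T u v : ℝ} (ht : 0 ≤ t) (htT : t ≤ T) (hT : 0 < T)
    (h0 : f 0 = (u : EReal)) (hTv : f T = (v : EReal)) :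
    f t ≤ (((1 - t / T) * u + (t / T) * v : ℝ) : EReal) := by
  have hα0 : 0 ≤ 1 - t / T := by
    rw [sub_nonneg, div_le_one hT]; exact htT
  have hα1 : 1 - t / T ≤ 1 := by
    have : 0 ≤ t / T := div_nonneg ht hT.le
    linarith
  have hk := conv_le hf hα0 hα1 h0 hTv
  have h1 : 1 - (1 - t / T) = t / T := by ring
  rw [h1] at hk
  have hcomb : (1 - t / T) * 0 + t / T * T = t := by
    field_simp
    ring
  rwa [hcomb] at hk

/-- `f*(0)` is bounded below by some real number. -/
private lemma fStarZero_lb (hf : MemF f) : ∃ m : ℝ, (m : EReal) ≤ fStarZero f := by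
  obtain ⟨ε, hε, hdom⟩ := hf.one_mem_interior_dom
  set a : ℝ := 1 - min ε 1 / 2 with ha_def
  have hmin : 0 < min ε 1 := lt_min hε one_pos
  have hmin1 : min ε 1 ≤ 1 := min_le_right _ _
  have hminε : min ε 1 ≤ ε := min_le_left _ _
  have ha1 : a < 1 := by rw [ha_def]; linarith
  have ha0 : 0 < a := by rw [ha_def]; linarith
  have hfa_ne_top : f a ≠ ⊤ := by
    apply hdom
    rw [abs_sub_lt_iff]
    constructor <;> rw [ha_def] <;> linarith
  obtain ⟨v, hv⟩ := ereal_exists_real (f a) (hf.ne_bot a) hfa_ne_top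
  have h1a : (0 : ℝ) < 1 - a := by linarith
  refine ⟨-(|v| / (1 - a)), Filter.le_limsup_of_frequently_le ?_⟩
  apply Filter.Eventually.frequently
  filter_upwards [eventually_ge_atTop (2 : ℝ)] with t ht
  have htpos : (0 : ℝ) < t := by linarith
  rcases eq_or_ne (f t) ⊤ with htop | hne
  · rw [htop, EReal.coe_mul_top_of_pos (by positivity)]
    exact le_top
  obtain ⟨s, hs⟩ := ereal_exists_real (f t) (hf.ne_bot t) hne
  have hk := conv_one_real hf ha1 (by linarith : (1 : ℝ) < t) hv hs
  rw [hs, ← EReal.coe_mul, EReal.coe_le_coe_iff]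
  rw [inv_mul_eq_div, ← neg_div, div_le_div_iff₀ h1a htpos]
  nlinarith [mul_le_mul_of_nonneg_left (le_abs_self v) (by linarith : (0 : ℝ) ≤ t - 1),
    abs_nonneg v]

/-- If `f 0 = r` is real then `f*(0) ≥ -r`. -/
private lemma fStarZero_ge (hf : MemF f) {r : ℝ} (h0 : f 0 = (r : EReal)) :
    ((-r : ℝ) : EReal) ≤ fStarZero f := by
  have hlim : Filter.limsup (fun t : ℝ => ((-r + r * t⁻¹ : ℝ) : EReal)) Filter.atTop
      = ((-r : ℝ) : EReal) := by
    apply Filter.Tendsto.limsup_eq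
    rw [EReal.tendsto_coe]
    have h : Tendsto (fun t : ℝ => -r + r * t⁻¹) atTop (nhds (-r + r * 0)) :=
      Tendsto.add tendsto_const_nhds (tendsto_inv_atTop_zero.const_mul r)
    simpa using h
  rw [← hlim]
  have hev : (fun t : ℝ => ((-r + r * t⁻¹ : ℝ) : EReal)) ≤ᶠ[atTop]
      (fun t : ℝ => ((t⁻¹ : ℝ) : EReal) * f t) := by
    filter_upwards [eventually_ge_atTop (2 : ℝ)] with t ht
    have htpos : (0 : ℝ) < t := by linarith
    rcases eq_or_ne (f t) ⊤ with htop | hne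
    · rw [htop, EReal.coe_mul_top_of_pos (by positivity)]
      exact le_top
    obtain ⟨s, hs⟩ := ereal_exists_real (f t) (hf.ne_bot t) hne
    have hk := conv_one_real hf (by norm_num : (0 : ℝ) < 1) (by linarith : (1 : ℝ) < t) h0 hs
    rw [hs, ← EReal.coe_mul, EReal.coe_le_coe_iff, inv_mul_eq_div]
    rw [← sub_nonneg]
    have heq : s / t - (-r + r * t⁻¹) = ((t - 1) * r + (1 - 0) * s) / t := by
      field_simp
      ring
    rw [heq]
    exact div_nonneg hk htpos.le
  exact Filter.limsup_le_limsup hev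

/-- Extraction of a large `T` with a real value `f T = s` and `s < b * T`. -/
private lemma exists_good_T (hf : MemF f) {b : ℝ} (hb : fStarZero f < (b : EReal)) (T₀ : ℝ) :
    ∃ T s : ℝ, T₀ ≤ T ∧ 2 ≤ T ∧ f T = (s : EReal) ∧ s < b * T := by
  have h1 := Filter.eventually_lt_of_limsup_lt hb
  have h2 : ∀ᶠ T : ℝ in atTop, T₀ ≤ T ∧ 2 ≤ T :=
    (eventually_ge_atTop T₀).and (eventually_ge_atTop 2)
  obtain ⟨T, hlt, hT₀, hT2⟩ := (h1.and h2).exists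
  have htpos : (0 : ℝ) < T := by linarith
  rcases eq_or_ne (f T) ⊤ with htop | hne
  · rw [htop, EReal.coe_mul_top_of_pos (by positivity)] at hlt
    exact absurd hlt not_top_lt
  obtain ⟨s, hs⟩ := ereal_exists_real (f T) (hf.ne_bot T) hne
  refine ⟨T, s, hT₀, hT2, hs, ?_⟩
  rw [hs, ← EReal.coe_mul, EReal.coe_lt_coe_iff, inv_mul_eq_div, div_lt_iff₀ htpos] at hlt
  linarith

end Aux

/-- For `f ∈ 𝔽`, the quantity `f(0) + f*(0)` belongs to `[0, +∞]`, and it equals `0` if and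
only if `f` is affine on `[0, ∞)`, i.e. `f(t) = c(t − 1)` on `[0, ∞)` for some `c ∈ ℝ`. -/
theorem f0_add_fStarZero_nonneg_and_eq_zero_iff_affine
    (f : ℝ → EReal) (hf : MemF f) :
    0 ≤ f 0 + fStarZero f ∧
    (f 0 + fStarZero f = 0 ↔
      ∃ c : ℝ, ∀ t : ℝ, 0 ≤ t → f t = ((c * (t - 1) : ℝ) : EReal)) := by
  obtain ⟨m, hm⟩ := fStarZero_lb hf
  have hsne : fStarZero f ≠ ⊥ := by
    intro hb
    rw [hb, le_bot_iff] at hm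
    exact EReal.coe_ne_bot m hm
  constructor
  · -- nonnegativity
    rcases eq_or_ne (f 0) ⊤ with h0 | h0
    · rw [h0, EReal.top_add_of_ne_bot hsne]
      exact le_top
    · obtain ⟨r, hr⟩ := ereal_exists_real _ (hf.ne_bot 0) h0
      have hge := fStarZero_ge hf hr
      calc (0 : EReal) = ((r : ℝ) : EReal) + ((-r : ℝ) : EReal) := by
            rw [← EReal.coe_add]; norm_num
        _ ≤ ((r : ℝ) : EReal) + fStarZero f := add_le_add_right hge _
        _ = f 0 + fStarZero f := by rw [hr]
  constructor
  · -- forward direction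
    intro h
    have h0ne : f 0 ≠ ⊤ := by
      intro h0
      rw [h0, EReal.top_add_of_ne_bot hsne] at h
      exact EReal.top_ne_zero h
    obtain ⟨r, hr⟩ := ereal_exists_real _ (hf.ne_bot 0) h0ne
    have hsnetop : fStarZero f ≠ ⊤ := by
      intro hT
      rw [hr, hT, EReal.coe_add_top] at h
      exact EReal.top_ne_zero h
    obtain ⟨c, hsv⟩ := ereal_exists_real _ hsne hsnetop
    rw [hr, hsv, ← EReal.coe_add] at h
    have hrc : r = -c := by
      have : r + c = 0 := by exact_mod_cast h
      linarith
    refine ⟨c, fun t ht => ?_⟩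
    -- upper bound
    have hub : ∀ ε : ℝ, 0 < ε → f t ≤ ((c * (t - 1) + (1 + t) * ε : ℝ) : EReal) := by
      intro ε hε
      have hblt : fStarZero f < ((c + ε : ℝ) : EReal) := by
        rw [hsv]
        exact_mod_cast lt_add_of_pos_right c hε
      obtain ⟨T, sT, hTge, hT2, hfT, hsT⟩ :=
        exists_good_T hf hblt (max t (t * |c| / ε) + 1)
      have hmax1 := le_max_left t (t * |c| / ε)
      have hmax2 := le_max_right t (t * |c| / ε)
      have hTt : t ≤ T := by linarith
      have hTpos : (0 : ℝ) < T := by linarith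
      have habs : t * |c| ≤ ε * (T - 1) := by
        have h1 : t * |c| / ε ≤ T - 1 := by linarith
        rw [div_le_iff₀ hε] at h1
        linarith
      have hle := conv_le_real hf ht hTt hTpos hr hfT
      refine le_trans hle ?_
      rw [EReal.coe_le_coe_iff]
      have heq2 : (1 - t / T) * r + t / T * sT = ((T - t) * r + t * sT) / T := by
        field_simp
      rw [heq2, div_le_iff₀ hTpos]
      have hts : t * sT ≤ t * ((c + ε) * T) :=
        mul_le_mul_of_nonneg_left hsT.le ht
      nlinarith [abs_nonneg c, le_abs_self c, neg_abs_le c]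
    have hftne : f t ≠ ⊤ := by
      intro htop
      have h2 := hub 1 one_pos
      rw [htop] at h2
      exact EReal.coe_ne_top _ (top_le_iff.mp h2)
    obtain ⟨u, hu⟩ := ereal_exists_real _ (hf.ne_bot t) hftne
    have hub' : u ≤ c * (t - 1) := by
      apply real_le_of_forall_pos
      intro ε hε
      have h1t : (0 : ℝ) < 1 + t := by linarith
      have h2 := hub (ε / (1 + t)) (by positivity)
      rw [hu, EReal.coe_le_coe_iff] at h2
      have : (1 + t) * (ε / (1 + t)) = ε := by field_simp
      linarith [this ▸ h2]
    have hlb : c * (t - 1) ≤ u := by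
      rcases le_or_gt 1 t with h1t | h1t
      · rcases eq_or_lt_of_le h1t with heq | hlt
        · have hu0 : (0 : ℝ) = u := by
            rw [← heq, hf.one_eq_zero] at hu
            exact_mod_cast hu
          rw [← heq]
          have hz : c * ((1 : ℝ) - 1) = 0 := by ring
          linarith
        · have hk := conv_one_real hf (by norm_num : (0 : ℝ) < 1) hlt hr hu
          nlinarith [hk]
      · apply real_le_of_forall_pos
        intro ε hε
        have hblt : fStarZero f < ((c + ε / 4 : ℝ) : EReal) := by
          rw [hsv]
          exact_mod_cast lt_add_of_pos_right c (by positivity)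
        obtain ⟨T, sT, hTge, hT2, hfT, hsT⟩ :=
          exists_good_T hf hblt (2 * |c| / ε + 2)
        have hk := conv_one_real hf h1t (by linarith : (1 : ℝ) < T) hu hfT
        -- hk : 0 ≤ (T - 1) * u + (1 - t) * sT
        have hA0 : (0 : ℝ) < 1 - t := by linarith
        have hA1 : 1 - t ≤ 1 := by linarith
        have hcε : 2 * |c| + 2 * ε ≤ ε * T := by
          have h1 : 2 * |c| / ε ≤ T - 2 := by linarith
          rw [div_le_iff₀ hε] at h1
          linarith
        have hsT' : (1 - t) * sT ≤ (1 - t) * ((c + ε / 4) * T) :=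
          mul_le_mul_of_nonneg_left hsT.le hA0.le
        -- want : c * (t - 1) ≤ u + ε
        have hT1 : (0 : ℝ) < T - 1 := by linarith
        have hTpos : (0 : ℝ) < T := by linarith
        nlinarith [hk, hsT', hcε, hT1, hε.le, hA0.le, abs_nonneg c,
          mul_le_mul_of_nonneg_right hA1 (mul_nonneg hε.le hTpos.le),
          mul_le_mul_of_nonneg_left (le_abs_self c) hA0.le,
          mul_le_mul_of_nonneg_right hA1 (abs_nonneg c)]
    have huv : u = c * (t - 1) := le_antisymm hub' hlb
    rw [hu, huv]
  · -- reverse direction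
    rintro ⟨c, hc⟩
    have h0 : f 0 = ((-c : ℝ) : EReal) := by
      have := hc 0 le_rfl
      rw [this]
      norm_num
    have hstar : fStarZero f = ((c : ℝ) : EReal) := by
      have hcong : fStarZero f
          = Filter.limsup (fun t : ℝ => ((c - c * t⁻¹ : ℝ) : EReal)) Filter.atTop := by
        apply Filter.limsup_congr
        filter_upwards [eventually_ge_atTop (1 : ℝ)] with t ht1
        have htpos : (0 : ℝ) < t := by linarith
        rw [hc t (by linarith), ← EReal.coe_mul]
        congr 1
        field_simp
      rw [hcong]
      apply Filter.Tendsto.limsup_eq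
      rw [EReal.tendsto_coe]
      have h : Tendsto (fun t : ℝ => c - c * t⁻¹) atTop (nhds (c - c * 0)) :=
        Tendsto.sub tendsto_const_nhds (tendsto_inv_atTop_zero.const_mul c)
      simpa using h
    rw [h0, hstar, ← EReal.coe_add]
    norm_num
end
end

section
/- Let P, Q be probability measures on a measurable space (Ω, 𝓕), (E, 𝓔) a measurable space, and φ : Ω → E a measurable function. If dP/dQ (defined (P+Q)-a.e. via the Lebesgue decomposition, with values in [0, ∞]) is σ(φ)-measurable, i.e. equals g ∘ φ (P+Q)-a.e. for some measurable g : E → [0, ∞], then dP/dQ = (d(φ♯P)/d(φ♯Q)) ∘ φ holds (P+Q)-a.e., and for every f ∈ 𝔽: D_f(φ♯P ‖ φ♯Q) = D_f(P ‖ Q). -/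
open MeasureTheory ProbabilityTheory Filter Set Topology
open scoped ENNReal NNReal

noncomputable section

section Aux

/-- A convex function in `MemF` is measurable. -/
lemma MemF.measurable_s9 {f : ℝ → EReal} (hf : MemF f) : Measurable f := by
  classical
  set s : Set ℝ := {x | f x ≠ ⊤} with hs_def
  have hfin : ∀ x ∈ s, f x = (((f x).toReal : ℝ) : EReal) := by
    intro x hx
    exact (EReal.coe_toReal hx (hf.ne_bot x)).symm
  have hconv : Convex ℝ s := by
    intro x hx y hy a b ha hb hab
    have hb' : b = 1 - a := by linarith
    have h1 := hf.convex x y a ha (by linarith)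
    simp only [smul_eq_mul, hs_def, Set.mem_setOf_eq, hb']
    refine ne_top_of_le_ne_top ?_ h1
    rw [hfin x hx, hfin y hy, ← EReal.coe_mul, ← EReal.coe_mul, ← EReal.coe_add]
    exact EReal.coe_ne_top _
  set g : ℝ → ℝ := fun x => (f x).toReal with hg_def
  have hgconv : ConvexOn ℝ (interior s) g := by
    refine ⟨hconv.interior, fun x hx y hy a b ha hb hab => ?_⟩
    have hxs : x ∈ s := interior_subset hx
    have hys : y ∈ s := interior_subset hy
    have hmem : a • x + b • y ∈ s := interior_subset (hconv.interior hx hy ha hb hab)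
    have hb' : b = 1 - a := by linarith
    have h1 := hf.convex x y a ha (by linarith)
    rw [← hb'] at h1
    simp only [smul_eq_mul] at hmem ⊢
    have h2 : ((g (a * x + b * y) : ℝ) : EReal) ≤ ((a * g x + b * g y : ℝ) : EReal) := by
      rw [EReal.coe_add, EReal.coe_mul, EReal.coe_mul]
      calc ((g (a * x + b * y) : ℝ) : EReal) = f (a * x + b * y) := (hfin _ hmem).symm
        _ ≤ (a : EReal) * f x + ((b : ℝ) : EReal) * f y := h1
        _ = (a : EReal) * ((g x : ℝ) : EReal) + ((b : ℝ) : EReal) * ((g y : ℝ) : EReal) := by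
            rw [← hfin x hxs, ← hfin y hys]
    exact_mod_cast h2
  have hcont : ContinuousOn g (interior s) := hgconv.continuousOn isOpen_interior
  have hFmeas : Measurable ((interior s).piecewise (fun x => ((g x : ℝ) : EReal))
      (fun _ => (⊤ : EReal))) := by
    refine ContinuousOn.measurable_piecewise ?_ continuousOn_const isOpen_interior.measurableSet
    exact continuous_coe_real_ereal.comp_continuousOn hcont
  refine hFmeas.measurable_of_countable_ne ?_
  have hsub : {x | (interior s).piecewise (fun x => ((g x : ℝ) : EReal)) (fun _ => (⊤ : EReal)) x
      ≠ f x} ⊆ s \ interior s := by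
    intro x hx
    simp only [Set.mem_setOf_eq] at hx
    by_cases hxi : x ∈ interior s
    · exact absurd (by rw [Set.piecewise_eq_of_mem _ _ _ hxi, ← hfin x (interior_subset hxi)])
        hx
    · constructor
      · by_contra hxs
        have hfx : f x = ⊤ := by
          by_contra h; exact hxs h
        exact hx (by rw [Set.piecewise_eq_of_notMem _ _ _ hxi, hfx])
      · exact hxi
  refine Set.Countable.mono hsub ?_
  -- `s \ interior s` has at most two points since `s` is convex in `ℝ`.
  have mid : ∀ a b c : ℝ, a ∈ s → c ∈ s → a < b → b < c → b ∈ interior s := by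
    intro a b c ha hc hab hbc
    have hIoo : Set.Ioo a c ⊆ s := fun y hy =>
      hconv.ordConnected.out ha hc ⟨le_of_lt hy.1, le_of_lt hy.2⟩
    exact interior_maximal hIoo isOpen_Ioo ⟨hab, hbc⟩
  have key : ∀ x y z : ℝ, x ∈ s \ interior s → y ∈ s \ interior s → z ∈ s \ interior s →
      x ≠ y → y ≠ z → x ≠ z → False := by
    intro x y z hx hy hz hxy hyz hxz
    rcases hxy.lt_or_gt with h1 | h1
    · rcases hyz.lt_or_gt with h2 | h2
      · exact hy.2 (mid x y z hx.1 hz.1 h1 h2)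
      · rcases hxz.lt_or_gt with h3 | h3
        · exact hz.2 (mid x z y hx.1 hy.1 h3 h2)
        · exact hx.2 (mid z x y hz.1 hy.1 h3 h1)
    · rcases hxz.lt_or_gt with h3 | h3
      · exact hx.2 (mid y x z hy.1 hz.1 h1 h3)
      · rcases hyz.lt_or_gt with h2 | h2
        · exact hz.2 (mid y z x hy.1 hx.1 h2 h3)
        · exact hy.2 (mid z y x hz.1 hx.1 h2 h1)
  by_cases hss : (s \ interior s).Subsingleton
  · exact hss.countable
  · obtain ⟨a, ha, b, hb, hab⟩ := Set.not_subsingleton_iff.mp hss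
    refine Set.Countable.mono ?_ ((Set.finite_singleton b).insert a).countable
    intro z hz
    by_contra hzm
    simp only [Set.mem_insert_iff, Set.mem_singleton_iff] at hzm
    push_neg at hzm
    exact key a b z ha hb hz hab (Ne.symm hzm.2) (Ne.symm hzm.1)

/-- The basic `ℝ≥0∞` computation identifying `p` from `p + q = 1` and `p / q = c`. -/
lemma aux_ratio (p q c : ℝ≥0∞) (hsum : p + q = 1) (hr : p / q = c) :
    p = if c = ⊤ then 1 else c / (1 + c) := by
  have hp_le : p ≤ 1 := hsum ▸ le_self_add
  have hq_le : q ≤ 1 := hsum ▸ le_add_self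
  have hp_ne : p ≠ ⊤ := fun h => by simp [h] at hp_le
  have hq_ne : q ≠ ⊤ := fun h => by simp [h] at hq_le
  by_cases hc : c = ⊤
  · simp only [hc, if_pos]
    rw [hc] at hr
    rcases ENNReal.div_eq_top.mp hr with ⟨_, hq0⟩ | ⟨hpt, _⟩
    · rw [hq0, add_zero] at hsum; exact hsum
    · exact absurd hpt hp_ne
  · simp only [hc, if_neg, if_false]
    have hq0 : q ≠ 0 := by
      intro hq0
      rw [hq0, add_zero] at hsum
      rw [hq0, hsum] at hr
      simp [ENNReal.div_zero] at hr
      exact hc hr.symm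
    have hpcq : p = c * q := by
      have h := (ENNReal.eq_div_iff hq0 hq_ne).mp hr.symm
      rw [mul_comm] at h; exact h.symm
    have hq_eq : (1 + c) * q = 1 := by
      calc (1 + c) * q = q + c * q := by ring
        _ = q + p := by rw [hpcq]
        _ = 1 := by rw [add_comm]; exact hsum
    have h1c_ne : (1 + c) ≠ ⊤ := by simp [hc]
    have h1c_0 : (1 + c) ≠ 0 := by simp
    have hq_val : q = (1 + c)⁻¹ :=
      ENNReal.eq_inv_of_mul_eq_one_left (by rw [mul_comm]; exact hq_eq)
    rw [hpcq, hq_val, ENNReal.div_eq_inv_mul, mul_comm]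

end Aux

/-- **Invariance of the `f`-divergence under push-forward.** If `dP/dQ` is
`σ(φ)`-measurable (i.e. `(P+Q)`-a.e. equal to a measurable function of `φ`), then
`dP/dQ = (d(φ♯P)/d(φ♯Q)) ∘ φ` holds `(P+Q)`-a.e., and `D_f(φ♯P‖φ♯Q) = D_f(P‖Q)` for every
`f ∈ 𝔽`. -/
theorem fDiv_map_of_rnRatio_measurable
    {Ω E : Type*} [MeasurableSpace Ω] [MeasurableSpace E]
    (P Q : Measure Ω) [IsProbabilityMeasure P] [IsProbabilityMeasure Q]
    (φ : Ω → E) (hφ : Measurable φ)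
    (hmeas : ∃ g : E → ℝ≥0∞, Measurable g ∧ rnRatio P Q =ᵐ[P + Q] fun ω => g (φ ω)) :
    (rnRatio P Q =ᵐ[P + Q] fun ω => rnRatio (P.map φ) (Q.map φ) (φ ω)) ∧
    (∀ f : ℝ → EReal, MemF f → fDiv f (P.map φ) (Q.map φ) = fDiv f P Q) := by
  classical
  obtain ⟨g, hg, hgφ⟩ := hmeas
  have hPle : P ≪ P + Q := Measure.absolutelyContinuous_of_le (Measure.le_add_right le_rfl)
  have hQle : Q ≪ P + Q := Measure.absolutelyContinuous_of_le (Measure.le_add_left le_rfl)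
  have hsum : ∀ᵐ ω ∂(P + Q),
      P.rnDeriv (P + Q) ω + Q.rnDeriv (P + Q) ω = 1 := by
    filter_upwards [Measure.rnDeriv_add P Q (P + Q), Measure.rnDeriv_self (P + Q)]
      with ω h1 h2
    rw [← Pi.add_apply, ← h1, h2]
  set h : E → ℝ≥0∞ := fun e => if g e = ⊤ then 1 else g e / (1 + g e) with h_def
  have hh : Measurable h := by
    refine Measurable.ite (hg (measurableSet_singleton ⊤)) measurable_const ?_
    exact hg.div (measurable_const.add hg)
  have hh2 : Measurable (fun e => 1 - h e) := measurable_const.sub hh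
  have hp_eq : P.rnDeriv (P + Q) =ᵐ[P + Q] fun ω => h (φ ω) := by
    filter_upwards [hsum, hgφ] with ω h1 h2
    exact aux_ratio _ _ _ h1 h2
  have hq_eq : Q.rnDeriv (P + Q) =ᵐ[P + Q] fun ω => 1 - h (φ ω) := by
    filter_upwards [hsum, hp_eq] with ω h1 h2
    have hp_ne : P.rnDeriv (P + Q) ω ≠ ⊤ := by
      intro ht
      rw [ht] at h1
      simp at h1
    rw [← h2]
    rw [add_comm] at h1
    exact ENNReal.eq_sub_of_add_eq hp_ne h1
  -- identification of mapped densities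
  haveI : IsFiniteMeasure ((P + Q).map φ) := Measure.isFiniteMeasure_map _ _
  have hPmap : P.map φ = ((P + Q).map φ).withDensity h := by
    ext A hA
    rw [Measure.map_apply hφ hA, withDensity_apply _ hA, setLIntegral_map hA hh hφ]
    have hPd : P (φ ⁻¹' A) = ∫⁻ ω in φ ⁻¹' A, P.rnDeriv (P + Q) ω ∂(P + Q) := by
      rw [← withDensity_apply _ (hφ hA), Measure.withDensity_rnDeriv_eq P (P + Q) hPle]
    rw [hPd]
    exact lintegral_congr_ae (ae_restrict_of_ae hp_eq)
  have hQmap : Q.map φ = ((P + Q).map φ).withDensity (fun e => 1 - h e) := by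
    ext A hA
    rw [Measure.map_apply hφ hA, withDensity_apply _ hA, setLIntegral_map hA hh2 hφ]
    have hQd : Q (φ ⁻¹' A) = ∫⁻ ω in φ ⁻¹' A, Q.rnDeriv (P + Q) ω ∂(P + Q) := by
      rw [← withDensity_apply _ (hφ hA), Measure.withDensity_rnDeriv_eq Q (P + Q) hQle]
    rw [hQd]
    exact lintegral_congr_ae (ae_restrict_of_ae hq_eq)
  have hmap_add : (P + Q).map φ = P.map φ + Q.map φ := Measure.map_add P Q hφ
  have hp' : (P.map φ).rnDeriv (P.map φ + Q.map φ) =ᵐ[(P + Q).map φ] h := by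
    rw [← hmap_add]
    conv_lhs => rw [hPmap]
    exact Measure.rnDeriv_withDensity _ hh
  have hq' : (Q.map φ).rnDeriv (P.map φ + Q.map φ) =ᵐ[(P + Q).map φ] fun e => 1 - h e := by
    rw [← hmap_add]
    conv_lhs => rw [hQmap]
    exact Measure.rnDeriv_withDensity _ hh2
  have hratio' : rnRatio (P.map φ) (Q.map φ) =ᵐ[(P + Q).map φ]
      fun e => h e / (1 - h e) := by
    filter_upwards [hp', hq'] with e h1 h2
    simp only [rnRatio]
    rw [h1, h2]
  have hr'm : Measurable (rnRatio (P.map φ) (Q.map φ)) :=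
    (Measure.measurable_rnDeriv _ _).div (Measure.measurable_rnDeriv _ _)
  have hS : MeasurableSet {e | rnRatio (P.map φ) (Q.map φ) e = h e / (1 - h e)} :=
    measurableSet_eq_fun hr'm (hh.div hh2)
  have hpull : ∀ᵐ ω ∂(P + Q),
      rnRatio (P.map φ) (Q.map φ) (φ ω) = h (φ ω) / (1 - h (φ ω)) := by
    have := (ae_map_iff hφ.aemeasurable hS).mp hratio'
    exact this
  have part1 : rnRatio P Q =ᵐ[P + Q] fun ω => rnRatio (P.map φ) (Q.map φ) (φ ω) := by
    filter_upwards [hp_eq, hq_eq, hpull] with ω h1 h2 h3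
    have hlhs : rnRatio P Q ω = h (φ ω) / (1 - h (φ ω)) := by
      simp only [rnRatio]; rw [h1, h2]
    rw [hlhs, h3]
  refine ⟨part1, fun f hf => ?_⟩
  have hfm : Measurable f := hf.measurable_s9
  have hext : Measurable (extF f) := by
    unfold extF
    exact Measurable.ite (measurableSet_singleton ⊤) measurable_const
      (hfm.comp ENNReal.measurable_toReal)
  have htoE : Measurable EReal.toENNReal' := by
    unfold EReal.toENNReal'
    exact Measurable.ite (measurableSet_singleton ⊤) measurable_const
      (ENNReal.measurable_ofReal.comp measurable_ereal_toReal)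
  have hP_ae : rnRatio P Q =ᵐ[P] fun ω => rnRatio (P.map φ) (Q.map φ) (φ ω) :=
    part1.filter_mono (ae_mono (Measure.le_add_right le_rfl))
  have hQ_ae : rnRatio P Q =ᵐ[Q] fun ω => rnRatio (P.map φ) (Q.map φ) (φ ω) :=
    part1.filter_mono (ae_mono (Measure.le_add_left le_rfl))
  have hInt : eInt (Q.map φ) (fun e => extF f (rnRatio (P.map φ) (Q.map φ) e))
      = eInt Q (fun ω => extF f (rnRatio P Q ω)) := by
    unfold eInt
    have e1 : ∫⁻ e, (extF f (rnRatio (P.map φ) (Q.map φ) e)).toENNReal' ∂(Q.map φ)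
        = ∫⁻ ω, (extF f (rnRatio P Q ω)).toENNReal' ∂Q := by
      rw [lintegral_map (f := fun e => (extF f (rnRatio (P.map φ) (Q.map φ) e)).toENNReal')
        (htoE.comp (hext.comp hr'm)) hφ]
      refine lintegral_congr_ae ?_
      filter_upwards [hQ_ae] with ω hω
      rw [hω]
    have e2 : ∫⁻ e, (-(extF f (rnRatio (P.map φ) (Q.map φ) e))).toENNReal' ∂(Q.map φ)
        = ∫⁻ ω, (-(extF f (rnRatio P Q ω))).toENNReal' ∂Q := by
      rw [lintegral_map (f := fun e => (-(extF f (rnRatio (P.map φ) (Q.map φ) e))).toENNReal')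
        (htoE.comp ((hext.comp hr'm).neg)) hφ]
      refine lintegral_congr_ae ?_
      filter_upwards [hQ_ae] with ω hω
      rw [hω]
    rw [e1, e2]
  have hTop : (P.map φ) {e | rnRatio (P.map φ) (Q.map φ) e = ⊤}
      = P {ω | rnRatio P Q ω = ⊤} := by
    have hset : MeasurableSet {e | rnRatio (P.map φ) (Q.map φ) e = ⊤} :=
      hr'm (measurableSet_singleton ⊤)
    rw [Measure.map_apply hφ hset]
    refine measure_congr ?_
    refine Filter.eventuallyEq_set.mpr ?_
    filter_upwards [hP_ae] with ω hω
    simp only [Set.mem_preimage, Set.mem_setOf_eq, hω]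
  rw [fDiv, fDiv, hInt, hTop]
end
end
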